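/- arXiv:1311.1918 — 5 statements merged into one kernel-verified Lean document; each statement's English description precedes it below -/
import Mathlib

section
/- Let D ⊆ ℝ^d be a compact convex set with 0 in its interior, μ, ν Borel probability measures on ℝ^d admitting a coupling of finite ‖·‖_{D*}-cost, and ψ : ℝ^d → ℝ a Kantorovich potential, i.e. ψ(y) − ψ(x) ≤ ‖y − x‖_{D*} for all x, y, and a coupling π ∈ Π(μ,ν) is optimal for the cost ‖y − x‖_{D*} if and only if π({(x,y) : ψ(y) − ψ(x) = ‖y − x‖_{D*}}) = 1. Set μ̂ := (id,ψ)_#μ, ν̂ := (id,ψ)_#ν, and let c_epi((x,s),(y,t)) := 0 if ‖y − x‖_{D*} ≤ t − s and +∞ otherwise (the cone cost of epi ‖·‖_{D*} on ℝ^{d+1}). Then for π ∈ Π(μ,ν) the following are equivalent: (1) π ∈ Π^opt_{‖·‖_{D*}}(μ,ν); (2) π̂ := ((id,ψ)×(id,ψ))_#π ∈ Π^f_{c_epi}(μ̂,ν̂); (3) π = (p_{ℝ^d} × p_{ℝ^d})_# π̂' for some π̂' ∈ Π^f_{c_epi}(μ̂,ν̂); (4) π̂ gives full measure to ∂⁺graph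 ψ := {((x,ψ(x)),(y,ψ(y))) : ψ(y) − ψ(x) = ‖y − x‖_{D*}}. -/
open MeasureTheory Set
open scoped ENNReal

noncomputable section

abbrev Euc (d : ℕ) : Type := EuclideanSpace ℝ (Fin d)

def IsCoupling {X : Type*} [MeasurableSpace X] (π : Measure (X × X)) (μ ν : Measure X) : Prop :=
  π.map Prod.fst = μ ∧ π.map Prod.snd = ν

/-- The transport cost `c(x,y) = ‖y - x‖_{D*}` given by the Minkowski gauge of `D`. -/
def normCost {d : ℕ} (D : Set (Euc d)) (p : Euc d × Euc d) : ℝ≥0∞ :=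
  ENNReal.ofReal (gauge D (p.2 - p.1))

def IsOptimalCoupling {X : Type*} [MeasurableSpace X] (c : X × X → ℝ≥0∞)
    (π : Measure (X × X)) (μ ν : Measure X) : Prop :=
  IsCoupling π μ ν ∧ ∀ π', IsCoupling π' μ ν → ∫⁻ p, c p ∂π ≤ ∫⁻ p, c p ∂π'

open Classical in
/-- The cone cost of `epi ‖·‖_{D*} ⊆ ℝ^{d+1}`. -/
def epiCost {d : ℕ} (D : Set (Euc d)) (q : (Euc d × ℝ) × (Euc d × ℝ)) : ℝ≥0∞ :=
  if gauge D (q.2.1 - q.1.1) ≤ q.2.2 - q.1.2 then 0 else ⊤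

/-!
Lifting along the graph map `x ↦ (x, ψ x)` turns the cost `‖y - x‖_{D*}` into the cone cost,
which is finite exactly on pairs with `‖y - x‖_{D*} ≤ ψ y - ψ x`. Since `ψ` is `‖·‖_{D*}`-Lipschitz,
this inequality forces equality, so all four conditions say that `π` is concentrated on the set
where `ψ` saturates the gauge, which characterises optimality of `π` because `ψ` is a Kantorovich
potential. A lift with prescribed marginals `(id, ψ)_# μ`, `(id, ψ)_# ν` lives on
`graph ψ × graph ψ`, so it carries no more information than its projection.
-/

open Filter

section Coupling

variable {X Y : Type*} [MeasurableSpace X] [MeasurableSpace Y]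
  {π : Measure (X × X)} {μ ν : Measure X}

lemma IsCoupling.isProbabilityMeasure [IsProbabilityMeasure μ] (h : IsCoupling π μ ν) :
    IsProbabilityMeasure π :=
  ⟨by rw [← preimage_univ (f := Prod.fst), ← Measure.map_apply measurable_fst .univ, h.1,
    measure_univ]⟩

lemma IsCoupling.map_prodMap (h : IsCoupling π μ ν) {f : X → Y} (hf : Measurable f) :
    IsCoupling (π.map (Prod.map f f)) (μ.map f) (ν.map f) :=
  ⟨by rw [Measure.map_map measurable_fst (hf.prodMap hf), ← h.1,
      Measure.map_map hf measurable_fst]; rfl,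
    by rw [Measure.map_map measurable_snd (hf.prodMap hf), ← h.2,
      Measure.map_map hf measurable_snd]; rfl⟩

lemma IsCoupling.ae_fst (h : IsCoupling π μ ν) {p : X → Prop} (hp : ∀ᵐ x ∂μ, p x) :
    ∀ᵐ q ∂π, p q.1 :=
  ae_of_ae_map measurable_fst.aemeasurable (h.1 ▸ hp)

lemma IsCoupling.ae_snd (h : IsCoupling π μ ν) {p : X → Prop} (hp : ∀ᵐ x ∂ν, p x) :
    ∀ᵐ q ∂π, p q.2 :=
  ae_of_ae_map measurable_snd.aemeasurable (h.2 ▸ hp)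

end Coupling

lemma ae_map_graph {α : Type*} [MeasurableSpace α] {ψ : α → ℝ} (hψ : Measurable ψ)
    (μ : Measure α) : ∀ᵐ z ∂μ.map (fun x => (x, ψ x)), z.2 = ψ z.1 :=
  (ae_map_iff (measurable_id.prodMk hψ).aemeasurable
    (measurableSet_eq_fun measurable_snd (hψ.comp measurable_fst))).mpr
    (Eventually.of_forall fun _ => rfl)

lemma exists_lipschitzWith_of_sub_le_gauge {E : Type*} [SeminormedAddCommGroup E]
    [NormedSpace ℝ E] {s : Set E} (hs : Convex ℝ s) (hs₀ : s ∈ nhds 0) {ψ : E → ℝ}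
    (hψ : ∀ x y, ψ y - ψ x ≤ gauge s (y - x)) : ∃ K, LipschitzWith K ψ := by
  obtain ⟨K, hK⟩ := hs.lipschitz_gauge hs₀
  refine ⟨K, LipschitzWith.of_le_add_mul K fun x y => ?_⟩
  have hgauge : gauge s (x - y) ≤ K * dist x y := by
    simpa [gauge_zero, dist_eq_norm] using hK.le_add_mul (x - y) 0
  linarith [hψ y x]

section EpiCost

variable {d : ℕ} {D : Set (Euc d)}

lemma measurableSet_epigraph_gauge (hD : Measurable (gauge D)) :
    MeasurableSet {q : (Euc d × ℝ) × (Euc d × ℝ) | gauge D (q.2.1 - q.1.1) ≤ q.2.2 - q.1.2} :=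
  measurableSet_le (hD.comp (measurable_snd.fst.sub measurable_fst.fst))
    (measurable_snd.snd.sub measurable_fst.snd)

lemma lintegral_epiCost_ne_top_iff (hD : Measurable (gauge D))
    (m : Measure ((Euc d × ℝ) × (Euc d × ℝ))) :
    ∫⁻ q, epiCost D q ∂m ≠ ⊤ ↔ ∀ᵐ q ∂m, gauge D (q.2.1 - q.1.1) ≤ q.2.2 - q.1.2 := by
  have hcost : epiCost D =
      {q | gauge D (q.2.1 - q.1.1) ≤ q.2.2 - q.1.2}ᶜ.indicator (fun _ => ⊤) := by
    ext q
    by_cases h : gauge D (q.2.1 - q.1.1) ≤ q.2.2 - q.1.2 <;> simp [epiCost, h]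
  rw [hcost, lintegral_indicator_const (measurableSet_epigraph_gauge hD).compl, ae_iff]
  simp +contextual [ENNReal.mul_eq_top, compl_ofPred]

lemma lintegral_epiCost_map_graph_ne_top_iff {ψ : Euc d → ℝ} (hψ : Measurable ψ)
    (hD : Measurable (gauge D)) (π : Measure (Euc d × Euc d)) :
    ∫⁻ q, epiCost D q ∂(π.map (Prod.map (fun x => (x, ψ x)) (fun x => (x, ψ x)))) ≠ ⊤ ↔
      ∀ᵐ p ∂π, gauge D (p.2 - p.1) ≤ ψ p.2 - ψ p.1 := by
  have hT : Measurable fun x => (x, ψ x) := measurable_id.prodMk hψ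
  rw [lintegral_epiCost_ne_top_iff hD,
    ae_map_iff (hT.prodMap hT).aemeasurable (measurableSet_epigraph_gauge hD)]
  rfl

lemma exists_finite_epiCost_lift_iff {ψ : Euc d → ℝ} (hψ : Measurable ψ) (hD : Measurable (gauge D))
    {μ ν : Measure (Euc d)} {π : Measure (Euc d × Euc d)} (hπ : IsCoupling π μ ν) :
    (∃ πh : Measure ((Euc d × ℝ) × (Euc d × ℝ)),
        IsCoupling πh (μ.map (fun x => (x, ψ x))) (ν.map (fun x => (x, ψ x))) ∧
        ∫⁻ q, epiCost D q ∂πh ≠ ⊤ ∧ π = πh.map (fun q => (q.1.1, q.2.1))) ↔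
      ∀ᵐ p ∂π, gauge D (p.2 - p.1) ≤ ψ p.2 - ψ p.1 := by
  have hT : Measurable fun x => (x, ψ x) := measurable_id.prodMk hψ
  have hproj : Measurable fun q : (Euc d × ℝ) × (Euc d × ℝ) => (q.1.1, q.2.1) :=
    measurable_fst.fst.prodMk measurable_snd.fst
  constructor
  · rintro ⟨πh, hπh, hcost, rfl⟩
    have hS : MeasurableSet {p : Euc d × Euc d | gauge D (p.2 - p.1) ≤ ψ p.2 - ψ p.1} :=
      measurableSet_le (hD.comp (measurable_snd.sub measurable_fst))
        ((hψ.comp measurable_snd).sub (hψ.comp measurable_fst))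
    rw [ae_map_iff hproj.aemeasurable hS]
    filter_upwards [(lintegral_epiCost_ne_top_iff hD πh).mp hcost,
      hπh.ae_fst (ae_map_graph hψ μ), hπh.ae_snd (ae_map_graph hψ ν)] with q hq h₁ h₂
    rwa [h₁, h₂] at hq
  · intro h
    refine ⟨_, hπ.map_prodMap hT, (lintegral_epiCost_map_graph_ne_top_iff hψ hD π).mpr h, ?_⟩
    rw [Measure.map_map hproj (hT.prodMap hT)]
    exact Measure.map_id.symm

lemma map_prodMap_graph_apply {ψ : Euc d → ℝ} (hψ : Measurable ψ) (hD : Measurable (gauge D))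
    (π : Measure (Euc d × Euc d)) :
    (π.map (Prod.map (fun x => (x, ψ x)) (fun x => (x, ψ x))))
        {q : (Euc d × ℝ) × (Euc d × ℝ) |
          q.1.2 = ψ q.1.1 ∧ q.2.2 = ψ q.2.1 ∧ ψ q.2.1 - ψ q.1.1 = gauge D (q.2.1 - q.1.1)} =
      π {p | ψ p.2 - ψ p.1 = gauge D (p.2 - p.1)} := by
  have hT : Measurable fun x => (x, ψ x) := measurable_id.prodMk hψ
  rw [Measure.map_apply (hT.prodMap hT)]
  · congr 1
    ext p
    simp
  · exact (measurableSet_eq_fun measurable_fst.snd (hψ.comp measurable_fst.fst)).inter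
      ((measurableSet_eq_fun measurable_snd.snd (hψ.comp measurable_snd.fst)).inter
        (measurableSet_eq_fun ((hψ.comp measurable_snd.fst).sub (hψ.comp measurable_fst.fst))
          (hD.comp (measurable_snd.fst.sub measurable_fst.fst))))

end EpiCost

theorem statement_6_general {d : ℕ} (D : Set (Euc d))
    (hDcv : Convex ℝ D) (hD0 : (0 : Euc d) ∈ interior D)
    (μ ν : Measure (Euc d)) [IsProbabilityMeasure μ]
    (ψ : Euc d → ℝ)
    (hψLip : ∀ x y : Euc d, ψ y - ψ x ≤ gauge D (y - x))
    (hψpot : ∀ π : Measure (Euc d × Euc d), IsCoupling π μ ν →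
      (IsOptimalCoupling (normCost D) π μ ν ↔
        π {p : Euc d × Euc d | ψ p.2 - ψ p.1 = gauge D (p.2 - p.1)} = 1))
    (π : Measure (Euc d × Euc d)) (hπ : IsCoupling π μ ν) :
    (IsOptimalCoupling (normCost D) π μ ν ↔
      (IsCoupling (π.map (Prod.map (fun x => (x, ψ x)) (fun x => (x, ψ x))))
          (μ.map (fun x => (x, ψ x))) (ν.map (fun x => (x, ψ x))) ∧
        ∫⁻ q, epiCost D q ∂(π.map (Prod.map (fun x => (x, ψ x)) (fun x => (x, ψ x)))) ≠ ⊤)) ∧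
    (IsOptimalCoupling (normCost D) π μ ν ↔
      ∃ πh : Measure ((Euc d × ℝ) × (Euc d × ℝ)),
        IsCoupling πh (μ.map (fun x => (x, ψ x))) (ν.map (fun x => (x, ψ x))) ∧
        ∫⁻ q, epiCost D q ∂πh ≠ ⊤ ∧
        π = πh.map (fun q => (q.1.1, q.2.1))) ∧
    (IsOptimalCoupling (normCost D) π μ ν ↔
      (π.map (Prod.map (fun x => (x, ψ x)) (fun x => (x, ψ x))))
        {q : (Euc d × ℝ) × (Euc d × ℝ) |
          q.1.2 = ψ q.1.1 ∧ q.2.2 = ψ q.2.1 ∧ ψ q.2.1 - ψ q.1.1 = gauge D (q.2.1 - q.1.1)} = 1) := by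
  have hD₀ : D ∈ nhds 0 := mem_interior_iff_mem_nhds.mp hD0
  have hD : Measurable (gauge D) := (continuous_gauge hDcv hD₀).measurable
  obtain ⟨K, hψK⟩ := exists_lipschitzWith_of_sub_le_gauge hDcv hD₀ hψLip
  have hψ : Measurable ψ := hψK.continuous.measurable
  have := hπ.isProbabilityMeasure
  have hS : MeasurableSet {p : Euc d × Euc d | ψ p.2 - ψ p.1 = gauge D (p.2 - p.1)} :=
    measurableSet_eq_fun ((hψ.comp measurable_snd).sub (hψ.comp measurable_fst))
      (hD.comp (measurable_snd.sub measurable_fst))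
  have hopt : IsOptimalCoupling (normCost D) π μ ν ↔
      ∀ᵐ p ∂π, gauge D (p.2 - p.1) ≤ ψ p.2 - ψ p.1 := by
    rw [hψpot π hπ, ← mem_ae_iff_prob_eq_one hS]
    exact eventually_congr (.of_forall fun p => ⟨fun h => h.ge, (hψLip p.1 p.2).antisymm⟩)
  refine ⟨?_, ?_, ?_⟩
  · rw [hopt, ← lintegral_epiCost_map_graph_ne_top_iff hψ hD]
    exact (and_iff_right (hπ.map_prodMap (measurable_id.prodMk hψ))).symm
  · rw [hopt, exists_finite_epiCost_lift_iff hψ hD hπ]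
  · rw [hψpot π hπ, map_prodMap_graph_apply hψ hD]

/-- **Lifting of the convex norm transport problem to the cone cost problem on the
graph of a Kantorovich potential** (Proposition 3.6 of Bianchini–Daneri). -/
theorem statement_6 {d : ℕ} (D : Set (Euc d))
    (hDcp : IsCompact D) (hDcv : Convex ℝ D) (hD0 : (0 : Euc d) ∈ interior D)
    (μ ν : Measure (Euc d)) [IsProbabilityMeasure μ] [IsProbabilityMeasure ν]
    (hfin : ∃ π₀ : Measure (Euc d × Euc d), IsCoupling π₀ μ ν ∧
      ∫⁻ p, normCost D p ∂π₀ ≠ ⊤)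
    (ψ : Euc d → ℝ)
    (hψLip : ∀ x y : Euc d, ψ y - ψ x ≤ gauge D (y - x))
    (hψpot : ∀ π : Measure (Euc d × Euc d), IsCoupling π μ ν →
      (IsOptimalCoupling (normCost D) π μ ν ↔
        π {p : Euc d × Euc d | ψ p.2 - ψ p.1 = gauge D (p.2 - p.1)} = 1))
    (π : Measure (Euc d × Euc d)) (hπ : IsCoupling π μ ν) :
    (IsOptimalCoupling (normCost D) π μ ν ↔
      (IsCoupling (π.map (Prod.map (fun x => (x, ψ x)) (fun x => (x, ψ x))))
          (μ.map (fun x => (x, ψ x))) (ν.map (fun x => (x, ψ x))) ∧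
        ∫⁻ q, epiCost D q ∂(π.map (Prod.map (fun x => (x, ψ x)) (fun x => (x, ψ x)))) ≠ ⊤)) ∧
    (IsOptimalCoupling (normCost D) π μ ν ↔
      ∃ πh : Measure ((Euc d × ℝ) × (Euc d × ℝ)),
        IsCoupling πh (μ.map (fun x => (x, ψ x))) (ν.map (fun x => (x, ψ x))) ∧
        ∫⁻ q, epiCost D q ∂πh ≠ ⊤ ∧
        π = πh.map (fun q => (q.1.1, q.2.1))) ∧
    (IsOptimalCoupling (normCost D) π μ ν ↔
      (π.map (Prod.map (fun x => (x, ψ x)) (fun x => (x, ψ x))))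
        {q : (Euc d × ℝ) × (Euc d × ℝ) |
          q.1.2 = ψ q.1.1 ∧ q.2.2 = ψ q.2.1 ∧ ψ q.2.1 - ψ q.1.1 = gauge D (q.2.1 - q.1.1)} = 1) :=
  statement_6_general D hDcv hD0 μ ν ψ hψLip hψpot π hπ
end
end

section
/- Let C ⊆ ℝ^k be a closed convex cone equal to the epigraph in ℝ^{k−1} × ℝ of the Minkowski gauge of a compact convex subset of ℝ^{k−1} with 0 in its interior. Let w, w' ∈ ℝ^k with w' − w ∈ C \ {0}, and let F be the extremal cone of C with w' − w in the relative interior of F (the minimal extremal cone of C containing w' − w). Then the set O(w,w') := (w + C) ∩ (w' − C) is the convex set (w + F) ∩ (w' − F); there exists δ > 0 such that B(w,δ) ∩ (w + F) ⊆ O(w,w') and B(w',δ) ∩ (w' − F) ⊆ O(w,w'); and the cone generated by O(w,w') − w and the cone generated by w' − O(w,w') both equal F. -/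
/-! The gauge is positively homogeneous, so `C` is a cone. If `x, y ∈ C` and `x + y ∈ F`, then
`x + y` is the midpoint of `2x, 2y ∈ C`, so extremality puts `2x, 2y`, hence (scaling along rays)
`x, y`, in `F`; with `x = z - w`, `y = w' - z` this identifies `O(w,w')`. Since `w' - w` is in the
relative interior of `F`, `w' - w - v ∈ F` for all small `v ∈ F`: this gives the balls, and
rescaling an arbitrary `v ∈ F` into that neighbourhood shows that `O - w` and `w' - O`
generate `F`. -/

open Set Metric

noncomputable section

theorem smul_self_mem_openSegment {E : Type*} [AddCommGroup E] [Module ℝ E] {a b : ℝ}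
    (h : (1 : ℝ) ∈ openSegment ℝ a b) (v : E) : v ∈ openSegment ℝ (a • v) (b • v) := by
  have := mem_image_of_mem (LinearMap.toSpanSingleton ℝ E v).toAffineMap h
  rw [image_openSegment] at this
  simpa using this

theorem gauge_epigraph_smul_mem {E : Type*} [AddCommGroup E] [Module ℝ E] (D : Set E)
    {t : ℝ} (ht : 0 ≤ t) {p : E × ℝ} (hp : gauge D p.1 ≤ p.2) :
    gauge D (t • p).1 ≤ (t • p).2 := by
  rw [Prod.smul_fst, Prod.smul_snd, gauge_smul_of_nonneg ht, smul_eq_mul, smul_eq_mul]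
  exact mul_le_mul_of_nonneg_left hp ht

namespace IsExtreme

variable {E : Type*} [AddCommGroup E] [Module ℝ E] {C F : Set E}

theorem smul_mem_of_one_mem_openSegment (hC : ∀ t : ℝ, 0 ≤ t → ∀ p ∈ C, t • p ∈ C)
    (hF : IsExtreme ℝ C F) {v : E} (hv : v ∈ F) {a b : ℝ} (ha : 0 ≤ a) (hb : 0 ≤ b)
    (h : (1 : ℝ) ∈ openSegment ℝ a b) : a • v ∈ F ∧ b • v ∈ F :=
  have hav := hC a ha v (hF.subset hv)
  have hbv := hC b hb v (hF.subset hv)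
  ⟨hF.left_mem_of_mem_openSegment hav hbv hv (smul_self_mem_openSegment h v),
    hF.right_mem_of_mem_openSegment hav hbv hv (smul_self_mem_openSegment h v)⟩

theorem zero_mem_of_isCone (hC : ∀ t : ℝ, 0 ≤ t → ∀ p ∈ C, t • p ∈ C) (hF : IsExtreme ℝ C F)
    {v : E} (hv : v ∈ F) : (0 : E) ∈ F := by
  have h : (1 : ℝ) ∈ openSegment ℝ 0 2 := by rw [openSegment_eq_Ioo two_pos]; norm_num
  simpa using (hF.smul_mem_of_one_mem_openSegment hC hv le_rfl zero_le_two h).1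

theorem smul_mem_of_isCone (hC : ∀ t : ℝ, 0 ≤ t → ∀ p ∈ C, t • p ∈ C) (hF : IsExtreme ℝ C F)
    {v : E} (hv : v ∈ F) {t : ℝ} (ht : 0 < t) : t • v ∈ F := by
  rcases lt_trichotomy t 1 with h1 | rfl | h1
  · have h : (1 : ℝ) ∈ openSegment ℝ t 2 := by
      rw [openSegment_eq_Ioo (by linarith)]; exact ⟨h1, one_lt_two⟩
    exact (hF.smul_mem_of_one_mem_openSegment hC hv ht.le zero_le_two h).1
  · rwa [one_smul]
  · have h : (1 : ℝ) ∈ openSegment ℝ 0 t := by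
      rw [openSegment_eq_Ioo ht]; exact ⟨zero_lt_one, h1⟩
    exact (hF.smul_mem_of_one_mem_openSegment hC hv le_rfl ht.le h).2

theorem mem_and_mem_of_add_mem (hC : ∀ t : ℝ, 0 ≤ t → ∀ p ∈ C, t • p ∈ C) (hF : IsExtreme ℝ C F)
    {x y : E} (hx : x ∈ C) (hy : y ∈ C) (hxy : x + y ∈ F) : x ∈ F ∧ y ∈ F := by
  have h : x + y ∈ openSegment ℝ ((2 : ℝ) • x) ((2 : ℝ) • y) :=
    ⟨1 / 2, 1 / 2, by norm_num, by norm_num, by norm_num, by module⟩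
  have h2x := hF.left_mem_of_mem_openSegment (hC 2 zero_le_two x hx) (hC 2 zero_le_two y hy) hxy h
  have h2y :=
    hF.right_mem_of_mem_openSegment (hC 2 zero_le_two x hx) (hC 2 zero_le_two y hy) hxy h
  constructor
  · simpa [smul_smul] using hF.smul_mem_of_isCone hC h2x (t := 1 / 2) (by norm_num)
  · simpa [smul_smul] using hF.smul_mem_of_isCone hC h2y (t := 1 / 2) (by norm_num)

end IsExtreme

theorem exists_sub_mem_of_mem_intrinsicInterior {E : Type*} [NormedAddCommGroup E]
    [NormedSpace ℝ E] {F : Set E} (hF : (0 : E) ∈ F) {u : E} (hu : u ∈ intrinsicInterior ℝ F) :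
    ∃ ε > 0, ∀ v ∈ F, ‖v‖ < ε → u - v ∈ F := by
  obtain ⟨y, hy, rfl⟩ := hu
  obtain ⟨ε, hε, hball⟩ := Metric.isOpen_iff.1 isOpen_interior y hy
  refine ⟨ε, hε, fun v hv hvε => ?_⟩
  have hmem : (0 -ᵥ v) +ᵥ (y : E) ∈ affineSpan ℝ F :=
    AffineSubspace.vadd_mem_of_mem_direction
      (AffineSubspace.vsub_mem_direction (mem_affineSpan ℝ hF) (mem_affineSpan ℝ hv)) y.2
  have := interior_subset
    (hball (a := ⟨_, hmem⟩) (by simpa [Subtype.dist_eq, dist_eq_norm]))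
  simpa [sub_eq_neg_add] using this

theorem IsExtreme.exists_smul_eq_of_mem_intrinsicInterior {E : Type*} [NormedAddCommGroup E]
    [NormedSpace ℝ E] {C F : Set E} (hC : ∀ t : ℝ, 0 ≤ t → ∀ p ∈ C, t • p ∈ C)
    (hF : IsExtreme ℝ C F) {u : E} (hu : u ∈ intrinsicInterior ℝ F) {v : E} (hv : v ∈ F) :
    ∃ t : ℝ, 0 < t ∧ ∃ x ∈ F, u - x ∈ F ∧ v = t • x := by
  obtain ⟨ε, hε, hsub⟩ := exists_sub_mem_of_mem_intrinsicInterior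
    (hF.zero_mem_of_isCone hC (intrinsicInterior_subset hu)) hu
  set s := ε / (‖v‖ + 1)
  have hs : 0 < s := by positivity
  have hsv : ‖s • v‖ < ε := by
    rw [norm_smul, Real.norm_of_nonneg hs.le, div_mul_eq_mul_div, div_lt_iff₀ (by positivity)]
    nlinarith [norm_nonneg v]
  refine ⟨s⁻¹, inv_pos.2 hs, s • v, hF.smul_mem_of_isCone hC hv hs,
    hsub _ (hF.smul_mem_of_isCone hC hv hs) hsv, ?_⟩
  rw [smul_smul, inv_mul_cancel₀ hs.ne', one_smul]

theorem statement_7_general {m : ℕ} (D' : Set (Euc m))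
    (C : Set (Euc m × ℝ)) (hC : C = {p : Euc m × ℝ | gauge D' p.1 ≤ p.2})
    (w w' : Euc m × ℝ)
    (F : Set (Euc m × ℝ)) (hFext : IsExtreme ℝ C F)
    (hFmin : w' - w ∈ intrinsicInterior ℝ F) :
    {z | z - w ∈ C ∧ w' - z ∈ C} = {z | z - w ∈ F ∧ w' - z ∈ F} ∧
    (∃ δ : ℝ, 0 < δ ∧
      ball w δ ∩ {z | z - w ∈ F} ⊆ {z | z - w ∈ C ∧ w' - z ∈ C} ∧
      ball w' δ ∩ {z | w' - z ∈ F} ⊆ {z | z - w ∈ C ∧ w' - z ∈ C}) ∧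
    {v | ∃ t : ℝ, 0 < t ∧ ∃ z, (z - w ∈ C ∧ w' - z ∈ C) ∧ v = t • (z - w)} = F ∧
    {v | ∃ t : ℝ, 0 < t ∧ ∃ z, (z - w ∈ C ∧ w' - z ∈ C) ∧ v = t • (w' - z)} = F := by
  have hcone : ∀ t : ℝ, 0 ≤ t → ∀ p ∈ C, t • p ∈ C := by
    subst hC
    exact fun t ht p hp => gauge_epigraph_smul_mem D' ht hp
  have hO {z} (h : z - w ∈ C ∧ w' - z ∈ C) : z - w ∈ F ∧ w' - z ∈ F :=
    hFext.mem_and_mem_of_add_mem hcone h.1 h.2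
      (by rw [sub_add_sub_cancel']; exact intrinsicInterior_subset hFmin)
  obtain ⟨ε, hε, hsub⟩ := exists_sub_mem_of_mem_intrinsicInterior
    (hFext.zero_mem_of_isCone hcone (intrinsicInterior_subset hFmin)) hFmin
  refine ⟨?_, ⟨ε, hε, ?_, ?_⟩, ?_, ?_⟩
  · ext z
    exact ⟨hO, fun h => ⟨hFext.subset h.1, hFext.subset h.2⟩⟩
  · rintro z ⟨hz, hzF⟩
    have := hsub _ hzF (mem_ball_iff_norm.1 hz)
    exact ⟨hFext.subset hzF, hFext.subset (by rwa [sub_sub_sub_cancel_right] at this)⟩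
  · rintro z ⟨hz, hzF⟩
    have := hsub _ hzF (mem_ball_iff_norm'.1 hz)
    exact ⟨hFext.subset (by rwa [sub_sub_sub_cancel_left] at this), hFext.subset hzF⟩
  · ext v
    refine ⟨fun ⟨t, ht, z, hz, hv⟩ => hv ▸ hFext.smul_mem_of_isCone hcone (hO hz).1 ht,
      fun hv => ?_⟩
    obtain ⟨t, ht, x, hx, hux, rfl⟩ :=
      hFext.exists_smul_eq_of_mem_intrinsicInterior hcone hFmin hv
    refine ⟨t, ht, w + x, ⟨?_, ?_⟩, by rw [add_sub_cancel_left]⟩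
    · rw [add_sub_cancel_left]; exact hFext.subset hx
    · rw [← sub_sub]; exact hFext.subset hux
  · ext v
    refine ⟨fun ⟨t, ht, z, hz, hv⟩ => hv ▸ hFext.smul_mem_of_isCone hcone (hO hz).2 ht,
      fun hv => ?_⟩
    obtain ⟨t, ht, x, hx, hux, rfl⟩ :=
      hFext.exists_smul_eq_of_mem_intrinsicInterior hcone hFmin hv
    refine ⟨t, ht, w' - x, ⟨?_, ?_⟩, by rw [sub_sub_cancel]⟩
    · rw [sub_right_comm]; exact hFext.subset hux
    · rw [sub_sub_cancel]; exact hFext.subset hx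

/-- **Structure of the set `O(w,w') = (w + C) ∩ (w' − C)`**
(Proposition 4.10 of Bianchini–Daneri). -/
theorem statement_7 {m : ℕ} (D' : Set (Euc m))
    (hcp : IsCompact D') (hcv : Convex ℝ D') (h0 : (0 : Euc m) ∈ interior D')
    (C : Set (Euc m × ℝ)) (hC : C = {p : Euc m × ℝ | gauge D' p.1 ≤ p.2})
    (w w' : Euc m × ℝ) (hww' : w' - w ∈ C) (hne : w' - w ≠ 0)
    (F : Set (Euc m × ℝ)) (hFconv : Convex ℝ F) (hFext : IsExtreme ℝ C F)
    (hFmin : w' - w ∈ intrinsicInterior ℝ F) :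
    {z | z - w ∈ C ∧ w' - z ∈ C} = {z | z - w ∈ F ∧ w' - z ∈ F} ∧
    (∃ δ : ℝ, 0 < δ ∧
      ball w δ ∩ {z | z - w ∈ F} ⊆ {z | z - w ∈ C ∧ w' - z ∈ C} ∧
      ball w' δ ∩ {z | w' - z ∈ F} ⊆ {z | z - w ∈ C ∧ w' - z ∈ C}) ∧
    {v | ∃ t : ℝ, 0 < t ∧ ∃ z, (z - w ∈ C ∧ w' - z ∈ C) ∧ v = t • (z - w)} = F ∧
    {v | ∃ t : ℝ, 0 < t ∧ ∃ z, (z - w ∈ C ∧ w' - z ∈ C) ∧ v = t • (w' - z)} = F :=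
  statement_7_general D' C hC w w' F hFext hFmin
end
end

section
/- Let C ⊆ ℝ^k = ℝ^{k−1} × ℝ be the epigraph of the Minkowski gauge N of a compact convex subset of ℝ^{k−1} with 0 in its interior, and let {θ⁻¹(t)}_{t∈T} be a c_C-Lipschitz foliation which is non-degenerate: every nonempty class K = {θ = t} contains points w, w' ∈ K such that int(w + C) ∩ K = ∅ and int(w' − C) ∩ K = ∅. Then there exist Borel functions h⁻, h⁺ defined on {(t,x) : x ∈ p_{ℝ^{k−1}}({θ = t})} such that: (1) for each t, x ↦ h⁻(t,x) and x ↦ h⁺(t,x) are N-Lipschitz, i.e. h^±(t,x') − h^±(t,x) ≤ N(x' − x); (2) every (x,y) in the closure of {θ = t} with x ∈ p_{ℝ^{k−1}}({θ = t}) satisfies h⁻(t,x) ≤ y ≤ h⁺(t,x); (3) the interior of {θ = t} in ℝ^k equals {(x,y) : x ∈ p_{ℝ^{k−1}}({θ = t}), h⁻(t,x) < y < h⁺(t,x)}. In particular the following are equivalent: {θ = t} has empty interior; h⁻(t,·) = h⁺(t,·) on p_{ℝ^{k−1}}({θ = t}); {θ = t} is a complete c_C-Lipschitz graph; {θ = t}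 coincides with the graph of h^±(t,·) over p_{ℝ^{k−1}}({θ = t}). -/
open Set Metric

noncomputable section

/-- The ambient space `ℝ^k = ℝ^{k-1} × ℝ` (here `k = m + 1`). -/
abbrev Wsp (m : ℕ) : Type := Euc m × ℝ

/-- The epigraph of the Minkowski gauge of `D'`, a closed non-degenerate convex cone. -/
def epiCone {m : ℕ} (D' : Set (Euc m)) : Set (Wsp m) := {p | gauge D' p.1 ≤ p.2}

/-- The cone (with positive coefficients) generated by `A`. -/
def coneGen {m : ℕ} (A : Set (Wsp m)) : Set (Wsp m) :=
  {x | ∃ t : ℝ, 0 < t ∧ ∃ a ∈ A, x = t • a}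

/-- The unit sphere `S^{k-1}`. -/
def sphereW (m : ℕ) : Set (Wsp m) := {v | ‖v‖ = 1}

/-- The spherical convex envelope `conv_S A = S^{k-1} ∩ ℝ⁺·conv A`. -/
def convSph {m : ℕ} (A : Set (Wsp m)) : Set (Wsp m) :=
  sphereW m ∩ coneGen (convexHull ℝ A)

/-- The cone `{0} ∪ ℝ⁺·conv A` generated by a set of directions `A`. -/
def coneOf {m : ℕ} (A : Set (Wsp m)) : Set (Wsp m) :=
  {0} ∪ coneGen (convexHull ℝ A)

/-- `G` is a `c_C`-Lipschitz graph. -/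
def IsLipGraph {m : ℕ} (C G : Set (Wsp m)) : Prop :=
  ∀ w ∈ G, ∀ w' ∈ G, w' - w ∈ C → w' - w ∈ frontier C

/-- `G` is a complete `c_C`-Lipschitz graph. -/
def IsCompleteLipGraph {m : ℕ} (C G : Set (Wsp m)) : Prop :=
  IsLipGraph C G ∧ ∀ w ∈ G, ∀ w' ∈ G, ∀ z, z - w ∈ C → w' - z ∈ C → z ∈ G

/-!
Each class `K` of the foliation is order-convex for the order `z - w ∈ C`, so it contains the
open diamond `int (w + C) ∩ int (w' - C)` spanned by any two of its points, and nondegeneracy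
gives `w₀, w₁ ∈ K` with `K` disjoint from `int (w₀ + C)` and `int (w₁ - C)`. Hence
`h⁺(x) = sup_{w ∈ K} (w.2 - N (w.1 - x))` and `h⁻(x) = inf_{w ∈ K} (w.2 + N (x - w.1))` are finite
and `N`-Lipschitz by the triangle inequality for the gauge `N`. A point `(x, y)` with
`h⁻(x) < y < h⁺(x)` lies in the diamond of two points of `K` witnessing the strict inequalities,
and conversely an interior point can be moved vertically inside `K`. The same two facts give the
equivalences for classes with empty interior: a vertical segment in `K` breaks the Lipschitz
graph property, and the midpoint of two points with `w' - w ∈ int C` is interior.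
The superlevel sets `{h⁺ > a}` are projections of σ-compact sets built from the σ-compact graph
of `θ`, hence Borel.
-/

open Filter Topology

section VerticalLines

variable {X : Type*} [TopologicalSpace X] {K : Set (X × ℝ)} {p : X × ℝ} {g : X → ℝ}

lemma exists_gt_mk_mem_of_mem_interior (hp : p ∈ interior K) : ∃ y, p.2 < y ∧ (p.1, y) ∈ K := by
  have h : ∀ᶠ y in 𝓝 p.2, (p.1, y) ∈ K :=
    (Continuous.prodMk_right p.1).continuousAt.preimage_mem_nhds (mem_interior_iff_mem_nhds.1 hp)
  exact (Eventually.and self_mem_nhdsWithin (h.filter_mono nhdsWithin_le_nhds) :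
    ∀ᶠ y in 𝓝[>] p.2, p.2 < y ∧ (p.1, y) ∈ K).exists

lemma exists_lt_mk_mem_of_mem_interior (hp : p ∈ interior K) : ∃ y, y < p.2 ∧ (p.1, y) ∈ K := by
  have h : ∀ᶠ y in 𝓝 p.2, (p.1, y) ∈ K :=
    (Continuous.prodMk_right p.1).continuousAt.preimage_mem_nhds (mem_interior_iff_mem_nhds.1 hp)
  exact (Eventually.and self_mem_nhdsWithin (h.filter_mono nhdsWithin_le_nhds) :
    ∀ᶠ y in 𝓝[<] p.2, y < p.2 ∧ (p.1, y) ∈ K).exists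

lemma interior_eq_empty_of_forall_snd_eq (h : ∀ w ∈ K, w.2 = g w.1) : interior K = ∅ := by
  refine eq_empty_of_forall_notMem fun p hp => ?_
  obtain ⟨y, hy, hyK⟩ := exists_gt_mk_mem_of_mem_interior hp
  have hp' := h p (interior_subset hp)
  have hy' := h _ hyK
  dsimp only at hy'
  linarith

variable {f : X → ℝ}

theorem interior_eq_empty_iff_eqOn (hfg : ∀ w ∈ K, f w.1 ≤ w.2 ∧ w.2 ≤ g w.1)
    (hint : interior K = {p | p.1 ∈ Prod.fst '' K ∧ f p.1 < p.2 ∧ p.2 < g p.1}) :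
    interior K = ∅ ↔ EqOn f g (Prod.fst '' K) := by
  constructor
  · rintro hK _ ⟨w, hw, rfl⟩
    by_contra hne
    have hlt := lt_of_le_of_ne ((hfg w hw).1.trans (hfg w hw).2) hne
    have hmid : (w.1, (f w.1 + g w.1) / 2) ∈ interior K := by
      rw [hint]
      exact ⟨⟨w, hw, rfl⟩, by dsimp only; linarith, by dsimp only; linarith⟩
    simp [hK] at hmid
  · intro h
    rw [hint, eq_empty_iff_forall_notMem]
    rintro p ⟨hp, hf, hg⟩
    linarith [h hp]

theorem interior_eq_empty_iff_eq_graph (hfg : ∀ w ∈ K, f w.1 ≤ w.2 ∧ w.2 ≤ g w.1)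
    (hint : interior K = {p | p.1 ∈ Prod.fst '' K ∧ f p.1 < p.2 ∧ p.2 < g p.1}) :
    interior K = ∅ ↔ K = {p | p.1 ∈ Prod.fst '' K ∧ p.2 = g p.1} := by
  refine ⟨fun hK => ?_, fun hK => interior_eq_empty_of_forall_snd_eq fun w hw => (hK.subset hw).2⟩
  have hfg_eq := (interior_eq_empty_iff_eqOn hfg hint).1 hK
  have hsnd : ∀ w ∈ K, w.2 = g w.1 := fun w hw =>
    le_antisymm (hfg w hw).2 (hfg_eq ⟨w, hw, rfl⟩ ▸ (hfg w hw).1)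
  ext p
  refine ⟨fun hp => ⟨⟨p, hp, rfl⟩, hsnd p hp⟩, ?_⟩
  rintro ⟨⟨w, hw, hw₁⟩, hp₂⟩
  rwa [show p = w from Prod.ext hw₁.symm (by rw [hp₂, ← hw₁, hsnd w hw])]

end VerticalLines

section SigmaCompact

variable {X Y : Type*} [TopologicalSpace X] [TopologicalSpace Y]

lemma IsSigmaCompact.prod {s : Set X} {t : Set Y} (hs : IsSigmaCompact s)
    (ht : IsSigmaCompact t) : IsSigmaCompact (s ×ˢ t) := by
  obtain ⟨K, hK, rfl⟩ := hs
  obtain ⟨L, hL, rfl⟩ := ht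
  rw [← iUnion_prod]
  exact isSigmaCompact_iUnion_of_isCompact _ fun n => (hK n.1).prod (hL n.2)

lemma IsSigmaCompact.inter_right {s t : Set X} (hs : IsSigmaCompact s) (ht : IsClosed t) :
    IsSigmaCompact (s ∩ t) := by
  obtain ⟨K, hK, rfl⟩ := hs
  rw [iUnion_inter]
  exact isSigmaCompact_iUnion_of_isCompact _ fun n => (hK n).inter_right ht

lemma IsSigmaCompact.measurableSet [T2Space X] [MeasurableSpace X] [OpensMeasurableSpace X]
    {s : Set X} (hs : IsSigmaCompact s) : MeasurableSet s := by
  obtain ⟨K, hK, rfl⟩ := hs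
  exact .iUnion fun n => (hK n).measurableSet

lemma IsOpen.isSigmaCompact [LocallyCompactSpace X] [SecondCountableTopology X] {U : Set X}
    (hU : IsOpen U) : IsSigmaCompact U := by
  have := hU.locallyCompactSpace
  exact isSigmaCompact_iff_sigmaCompactSpace.2 inferInstance

lemma IsSigmaCompact.setOf_exists_mem_and_mem {T : Type*} [TopologicalSpace T] [T2Space X]
    {E : Set (X × T)} {O : Set (X × Y)} (hE : IsSigmaCompact E) (hO : IsSigmaCompact O) :
    IsSigmaCompact {q : T × Y | ∃ x, (x, q.1) ∈ E ∧ (x, q.2) ∈ O} := by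
  have h := ((hE.prod hO).inter_right (isClosed_eq (f := fun c : (X × T) × (X × Y) => c.1.1)
    (g := fun c => c.2.1) (by fun_prop) (by fun_prop))).image
    (f := fun c : (X × T) × (X × Y) => (c.1.2, c.2.2)) (by fun_prop)
  convert h using 1
  ext ⟨t, y⟩
  constructor
  · rintro ⟨x, hxt, hxy⟩
    exact ⟨((x, t), (x, y)), ⟨⟨hxt, hxy⟩, rfl⟩, rfl⟩
  · rintro ⟨⟨⟨x, t'⟩, ⟨x', y'⟩⟩, ⟨⟨hxt, hxy⟩, hx : x = x'⟩, h⟩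
    obtain ⟨rfl, rfl⟩ := Prod.mk.inj h
    exact ⟨x, hxt, hx ▸ hxy⟩

theorem measurable_sSup_image {T : Type*} [TopologicalSpace T] [T2Space T] [MeasurableSpace T]
    [OpensMeasurableSpace T] [T2Space X] [LocallyCompactSpace X] [SecondCountableTopology X]
    [T2Space Y] [LocallyCompactSpace Y] [SecondCountableTopology Y] [MeasurableSpace Y]
    [OpensMeasurableSpace Y] {K : T → Set X} (hK : IsSigmaCompact {p : X × T | p.1 ∈ K p.2})
    {g : X × Y → ℝ} (hg : Continuous g) (hbdd : ∀ t y, BddAbove ((fun x => g (x, y)) '' K t)) :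
    Measurable fun q : T × Y => sSup ((fun x => g (x, q.2)) '' K q.1) := by
  refine measurable_of_Ioi fun a => ?_
  have hP : MeasurableSet {q : T × Y | ∃ x, x ∈ K q.1 ∧ (x, q.2) ∈ {c | a < g c}} :=
    (hK.setOf_exists_mem_and_mem (isOpen_lt continuous_const hg).isSigmaCompact).measurableSet
  have hZ : MeasurableSet {q : T × Y | K q.1 = ∅} := by
    have : {q : T × Y | K q.1 = ∅} = Prod.fst ⁻¹' (Prod.snd '' {p : X × T | p.1 ∈ K p.2})ᶜ := by
      ext; simp [eq_empty_iff_forall_notMem]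
    rw [this]
    exact measurable_fst (hK.image continuous_snd).measurableSet.compl
  -- `sSup ∅ = 0`, so a point with an empty fibre lies in the preimage of `Ioi a` iff `a < 0`.
  convert hP.union (hZ.inter (MeasurableSet.const (a < 0))) using 1
  ext q
  rcases (K q.1).eq_empty_or_nonempty with h | h
  · simp [h]
  · simp [lt_csSup_iff (hbdd _ _) (h.image _), h.ne_empty]

end SigmaCompact

section Envelope

variable {E : Type*} [AddCommGroup E] [Module ℝ E] {D : Set E} {K : Set (E × ℝ)} {w : E × ℝ}

/-! With `C = {(x, y) | gauge D x ≤ y}`, `upperEnvelope D K` and `lowerEnvelope D K` are the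
upper boundary of `K - C` and the lower boundary of `K + C`, and `ConeBddAbove D K` says that
`K` misses the open cone `w₀ + interior C` for some `w₀`. -/

def upperEnvelope (D : Set E) (K : Set (E × ℝ)) (x : E) : ℝ :=
  sSup ((fun w : E × ℝ => w.2 - gauge D (w.1 - x)) '' K)

def lowerEnvelope (D : Set E) (K : Set (E × ℝ)) (x : E) : ℝ :=
  sInf ((fun w : E × ℝ => w.2 + gauge D (x - w.1)) '' K)

def ConeBddAbove (D : Set E) (K : Set (E × ℝ)) : Prop :=
  ∃ w₀ : E × ℝ, ∀ z ∈ K, z.2 - w₀.2 ≤ gauge D (z.1 - w₀.1)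

def ConeBddBelow (D : Set E) (K : Set (E × ℝ)) : Prop :=
  ∃ w₀ : E × ℝ, ∀ z ∈ K, w₀.2 - z.2 ≤ gauge D (w₀.1 - z.1)

def ConeOrdConnected (D : Set E) (K : Set (E × ℝ)) : Prop :=
  ∀ w ∈ K, ∀ w' ∈ K, ∀ z : E × ℝ,
    gauge D (z.1 - w.1) ≤ z.2 - w.2 → gauge D (w'.1 - z.1) ≤ w'.2 - z.2 → z ∈ K

lemma gauge_sub_le_add (hD : Convex ℝ D) (hA : Absorbent ℝ D) (a b c : E) :
    gauge D (a - c) ≤ gauge D (a - b) + gauge D (b - c) := by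
  simpa using gauge_add_le hD hA (a - b) (b - c)

namespace ConeBddAbove

lemma bddAbove_image (hD : Convex ℝ D) (hA : Absorbent ℝ D) (hK : ConeBddAbove D K) (x : E) :
    BddAbove ((fun w : E × ℝ => w.2 - gauge D (w.1 - x)) '' K) := by
  obtain ⟨w₀, hw₀⟩ := hK
  refine ⟨w₀.2 + gauge D (x - w₀.1), ?_⟩
  rintro _ ⟨z, hz, rfl⟩
  linarith [hw₀ z hz, gauge_sub_le_add hD hA z.1 x w₀.1]

lemma le_upperEnvelope (hD : Convex ℝ D) (hA : Absorbent ℝ D) (hK : ConeBddAbove D K)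
    (hw : w ∈ K) (x : E) : w.2 - gauge D (w.1 - x) ≤ upperEnvelope D K x :=
  le_csSup (hK.bddAbove_image hD hA x) ⟨w, hw, rfl⟩

lemma snd_le_upperEnvelope (hD : Convex ℝ D) (hA : Absorbent ℝ D) (hK : ConeBddAbove D K)
    (hw : w ∈ K) : w.2 ≤ upperEnvelope D K w.1 := by
  simpa using hK.le_upperEnvelope hD hA hw w.1

lemma upperEnvelope_sub_le (hD : Convex ℝ D) (hA : Absorbent ℝ D) (hK : ConeBddAbove D K)
    (hne : K.Nonempty) (x x' : E) : upperEnvelope D K x' - upperEnvelope D K x ≤ gauge D (x' - x) := by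
  rw [sub_le_iff_le_add]
  refine csSup_le (hne.image _) ?_
  rintro _ ⟨w, hw, rfl⟩
  linarith [hK.le_upperEnvelope hD hA hw x, gauge_sub_le_add hD hA w.1 x' x]

end ConeBddAbove

lemma exists_lt_of_lt_upperEnvelope {x : E} {y : ℝ} (hne : K.Nonempty)
    (h : y < upperEnvelope D K x) : ∃ w ∈ K, y < w.2 - gauge D (w.1 - x) := by
  obtain ⟨_, ⟨w, hw, rfl⟩, hy⟩ := exists_lt_of_lt_csSup (hne.image _) h
  exact ⟨w, hw, hy⟩

lemma exists_lt_of_lowerEnvelope_lt {x : E} {y : ℝ} (hne : K.Nonempty)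
    (h : lowerEnvelope D K x < y) : ∃ w ∈ K, w.2 + gauge D (x - w.1) < y := by
  obtain ⟨_, ⟨w, hw, rfl⟩, hy⟩ := exists_lt_of_csInf_lt (hne.image _) h
  exact ⟨w, hw, hy⟩

lemma lowerEnvelope_eq_neg_upperEnvelope_neg (D : Set E) (K : Set (E × ℝ)) (x : E) :
    lowerEnvelope D K x = -upperEnvelope D (-K) (-x) := by
  rw [lowerEnvelope, upperEnvelope, Real.sInf_def, ← image_neg_eq_neg, ← image_neg_eq_neg,
    image_image, image_image]
  simp only [Prod.snd_neg, Prod.fst_neg, neg_sub_neg, neg_add']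

lemma ConeBddBelow.neg (hK : ConeBddBelow D K) : ConeBddAbove D (-K) := by
  obtain ⟨w₀, hw₀⟩ := hK
  refine ⟨-w₀, fun z hz => ?_⟩
  have := hw₀ (-z) hz
  simp only [Prod.snd_neg, Prod.fst_neg, sub_neg_eq_add] at this ⊢
  rwa [add_comm z.2, add_comm z.1]

namespace ConeBddBelow

lemma lowerEnvelope_le (hD : Convex ℝ D) (hA : Absorbent ℝ D) (hK : ConeBddBelow D K)
    (hw : w ∈ K) (x : E) : lowerEnvelope D K x ≤ w.2 + gauge D (x - w.1) := by
  have := hK.neg.le_upperEnvelope hD hA (neg_mem_neg.2 hw) (-x)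
  simp only [Prod.snd_neg, Prod.fst_neg, neg_sub_neg] at this
  rw [lowerEnvelope_eq_neg_upperEnvelope_neg]
  linarith

lemma lowerEnvelope_le_snd (hD : Convex ℝ D) (hA : Absorbent ℝ D) (hK : ConeBddBelow D K)
    (hw : w ∈ K) : lowerEnvelope D K w.1 ≤ w.2 := by
  simpa using hK.lowerEnvelope_le hD hA hw w.1

lemma lowerEnvelope_sub_le (hD : Convex ℝ D) (hA : Absorbent ℝ D) (hK : ConeBddBelow D K)
    (hne : K.Nonempty) (x x' : E) : lowerEnvelope D K x' - lowerEnvelope D K x ≤ gauge D (x' - x) := by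
  simp only [lowerEnvelope_eq_neg_upperEnvelope_neg, neg_sub_neg]
  simpa only [neg_sub_neg] using hK.neg.upperEnvelope_sub_le hD hA hne.neg (-x') (-x)

end ConeBddBelow

variable [TopologicalSpace E] [IsTopologicalAddGroup E] [ContinuousSMul ℝ E]

lemma ConeBddAbove.le_upperEnvelope_of_mem_closure (hD : Convex ℝ D) (hD0 : D ∈ 𝓝 0)
    (hK : ConeBddAbove D K) {p : E × ℝ} (hp : p ∈ closure K) : p.2 ≤ upperEnvelope D K p.1 := by
  have := continuous_gauge hD hD0
  have hcont : Continuous fun w : E × ℝ => w.2 - gauge D (w.1 - p.1) := by fun_prop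
  have h : p ∈ {w : E × ℝ | w.2 - gauge D (w.1 - p.1) ≤ upperEnvelope D K p.1} :=
    closure_minimal (fun w hw => hK.le_upperEnvelope hD (absorbent_nhds_zero hD0) hw p.1)
      (isClosed_le hcont continuous_const) hp
  simpa using h

lemma ConeBddBelow.lowerEnvelope_le_of_mem_closure (hD : Convex ℝ D) (hD0 : D ∈ 𝓝 0)
    (hK : ConeBddBelow D K) {p : E × ℝ} (hp : p ∈ closure K) : lowerEnvelope D K p.1 ≤ p.2 := by
  have := hK.neg.le_upperEnvelope_of_mem_closure hD hD0 (neg_closure K ▸ neg_mem_neg.2 hp)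
  rw [lowerEnvelope_eq_neg_upperEnvelope_neg]
  simp only [Prod.snd_neg, Prod.fst_neg] at this
  linarith

namespace ConeOrdConnected

lemma inter_subset_interior (hD : Convex ℝ D) (hD0 : D ∈ 𝓝 0) (hK : ConeOrdConnected D K)
    {w w' : E × ℝ} (hw : w ∈ K) (hw' : w' ∈ K) :
    {z : E × ℝ | gauge D (z.1 - w.1) < z.2 - w.2} ∩ {z | gauge D (w'.1 - z.1) < w'.2 - z.2}
      ⊆ interior K := by
  have := continuous_gauge hD hD0
  exact interior_maximal (fun z hz => hK w hw w' hw' z hz.1.le hz.2.le)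
    ((isOpen_lt (by fun_prop) (by fun_prop)).inter (isOpen_lt (by fun_prop) (by fun_prop)))

lemma interior_nonempty (hD : Convex ℝ D) (hD0 : D ∈ 𝓝 0) (hK : ConeOrdConnected D K)
    {w w' : E × ℝ} (hw : w ∈ K) (hw' : w' ∈ K) (h : gauge D (w'.1 - w.1) < w'.2 - w.2) :
    (interior K).Nonempty := by
  set z := w + (2⁻¹ : ℝ) • (w' - w)
  have h₁ : z - w = (2⁻¹ : ℝ) • (w' - w) := add_sub_cancel_left w _
  have h₂ : w' - z = (2⁻¹ : ℝ) • (w' - w) := by module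
  have hhalf : gauge D (((2⁻¹ : ℝ) • (w' - w)).1) < ((2⁻¹ : ℝ) • (w' - w)).2 := by
    rw [Prod.smul_fst, Prod.smul_snd, gauge_smul_of_nonneg (by norm_num), smul_eq_mul,
      smul_eq_mul]
    exact mul_lt_mul_of_pos_left h (by norm_num)
  refine ⟨z, hK.inter_subset_interior hD hD0 hw hw' ⟨?_, ?_⟩⟩
  · show gauge D (z - w).1 < (z - w).2
    rwa [h₁]
  · show gauge D (w' - z).1 < (w' - z).2
    rwa [h₂]

theorem interior_eq (hD : Convex ℝ D) (hD0 : D ∈ 𝓝 0) (hK : ConeOrdConnected D K)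
    (ha : ConeBddAbove D K) (hb : ConeBddBelow D K) :
    interior K = {p | p.1 ∈ Prod.fst '' K ∧ lowerEnvelope D K p.1 < p.2 ∧
      p.2 < upperEnvelope D K p.1} := by
  have hA := absorbent_nhds_zero (𝕜 := ℝ) hD0
  ext p
  constructor
  · intro hp
    obtain ⟨y, hy, hyK⟩ := exists_gt_mk_mem_of_mem_interior hp
    obtain ⟨y', hy', hy'K⟩ := exists_lt_mk_mem_of_mem_interior hp
    exact ⟨⟨p, interior_subset hp, rfl⟩, (hb.lowerEnvelope_le_snd hD hA hy'K).trans_lt hy',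
      hy.trans_le (ha.snd_le_upperEnvelope hD hA hyK)⟩
  · rintro ⟨⟨w, hw, -⟩, hlow, hup⟩
    obtain ⟨w₀, hw₀, h₀⟩ := exists_lt_of_lt_upperEnvelope ⟨w, hw⟩ hup
    obtain ⟨w₁, hw₁, h₁⟩ := exists_lt_of_lowerEnvelope_lt ⟨w, hw⟩ hlow
    exact hK.inter_subset_interior hD hD0 hw₁ hw₀
      ⟨show gauge D (p.1 - w₁.1) < p.2 - w₁.2 by linarith,
        show gauge D (w₀.1 - p.1) < w₀.2 - p.2 by linarith⟩

end ConeOrdConnected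

end Envelope

section Measurability

variable {E : Type*} [AddCommGroup E] [Module ℝ E] [TopologicalSpace E] [IsTopologicalAddGroup E]
  [ContinuousSMul ℝ E] [T2Space E] [LocallyCompactSpace E] [SecondCountableTopology E]
  [MeasurableSpace E] [BorelSpace E] {D : Set E}
  {T : Type*} [TopologicalSpace T] [T2Space T] [MeasurableSpace T] [OpensMeasurableSpace T]
  {K : T → Set (E × ℝ)}

theorem measurable_upperEnvelope (hK : IsSigmaCompact {p : (E × ℝ) × T | p.1 ∈ K p.2})
    (hD : Convex ℝ D) (hD0 : D ∈ 𝓝 0) (hbdd : ∀ t, ConeBddAbove D (K t)) :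
    Measurable fun q : T × E => upperEnvelope D (K q.1) q.2 := by
  have := continuous_gauge hD hD0
  exact measurable_sSup_image hK (g := fun c : (E × ℝ) × E => c.1.2 - gauge D (c.1.1 - c.2))
    (by fun_prop) fun t x => (hbdd t).bddAbove_image hD (absorbent_nhds_zero hD0) x

theorem measurable_lowerEnvelope (hK : IsSigmaCompact {p : (E × ℝ) × T | p.1 ∈ K p.2})
    (hD : Convex ℝ D) (hD0 : D ∈ 𝓝 0) (hbdd : ∀ t, ConeBddBelow D (K t)) :
    Measurable fun q : T × E => lowerEnvelope D (K q.1) q.2 := by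
  simp only [lowerEnvelope_eq_neg_upperEnvelope_neg]
  have hK' : IsSigmaCompact {p : (E × ℝ) × T | p.1 ∈ -K p.2} :=
    ((Homeomorph.neg (E × ℝ)).prodCongr (Homeomorph.refl T)).isSigmaCompact_preimage.2 hK
  exact ((measurable_upperEnvelope hK' hD hD0 fun t => (hbdd t).neg).comp
    (measurable_fst.prodMk measurable_snd.neg)).neg

end Measurability

section EpiCone

variable {m : ℕ} {D : Set (Euc m)} {K : Set (Wsp m)}

lemma isClosed_epiCone (hD : Convex ℝ D) (hD0 : D ∈ 𝓝 0) : IsClosed (epiCone D) :=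
  isClosed_le ((continuous_gauge hD hD0).comp continuous_fst) continuous_snd

lemma interior_epiCone (hD : Convex ℝ D) (hD0 : D ∈ 𝓝 0) :
    interior (epiCone D) = {p | gauge D p.1 < p.2} := by
  refine Subset.antisymm (fun p hp => ?_) (interior_maximal (fun p (hp : gauge D p.1 < p.2) => hp.le)
    (isOpen_lt ((continuous_gauge hD hD0).comp continuous_fst) continuous_snd))
  obtain ⟨y, hy, hyC⟩ := exists_lt_mk_mem_of_mem_interior hp
  exact lt_of_le_of_lt hyC hy

lemma mem_frontier_epiCone (hD : Convex ℝ D) (hD0 : D ∈ 𝓝 0) {p : Wsp m} :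
    p ∈ frontier (epiCone D) ↔ gauge D p.1 = p.2 := by
  rw [(isClosed_epiCone hD hD0).frontier_eq, interior_epiCone hD hD0]
  exact ⟨fun h => le_antisymm h.1 (not_lt.1 h.2), fun h => ⟨h.le, h.not_lt⟩⟩

lemma coneBddAbove_of_interior_inter_eq_empty (hD : Convex ℝ D) (hD0 : D ∈ 𝓝 0) {w : Wsp m}
    (h : interior {z | z - w ∈ epiCone D} ∩ K = ∅) : ConeBddAbove D K := by
  refine ⟨w, fun z hz => not_lt.1 fun hlt => eq_empty_iff_forall_notMem.1 h z ⟨?_, hz⟩⟩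
  refine preimage_interior_subset_interior_preimage (continuous_sub_right w) ?_
  rw [mem_preimage, interior_epiCone hD hD0]
  exact hlt

lemma coneBddBelow_of_interior_inter_eq_empty (hD : Convex ℝ D) (hD0 : D ∈ 𝓝 0) {w : Wsp m}
    (h : interior {z | w - z ∈ epiCone D} ∩ K = ∅) : ConeBddBelow D K := by
  refine ⟨w, fun z hz => not_lt.1 fun hlt => eq_empty_iff_forall_notMem.1 h z ⟨?_, hz⟩⟩
  refine preimage_interior_subset_interior_preimage (continuous_sub_left w) ?_
  rw [mem_preimage, interior_epiCone hD hD0]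
  exact hlt

lemma coneBddAbove_and_coneBddBelow_of_nondegenerate (hD : Convex ℝ D) (hD0 : D ∈ 𝓝 0)
    (h : K.Nonempty → ∃ w ∈ K, ∃ w' ∈ K, interior {z | z - w ∈ epiCone D} ∩ K = ∅ ∧
      interior {z | w' - z ∈ epiCone D} ∩ K = ∅) :
    ConeBddAbove D K ∧ ConeBddBelow D K := by
  rcases K.eq_empty_or_nonempty with hK | hK
  · subst hK
    exact ⟨⟨0, fun _ => False.elim⟩, ⟨0, fun _ => False.elim⟩⟩
  · obtain ⟨w, -, w', -, hw, hw'⟩ := h hK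
    exact ⟨coneBddAbove_of_interior_inter_eq_empty hD hD0 hw,
      coneBddBelow_of_interior_inter_eq_empty hD hD0 hw'⟩

lemma coneOrdConnected_fiber {α : Type*} {dom : Set (Wsp m)} {θ : Wsp m → α}
    (h : ∀ w ∈ dom, ∀ w' ∈ dom, θ w = θ w' →
      ∀ z, z - w ∈ epiCone D → w' - z ∈ epiCone D → z ∈ dom ∧ θ z = θ w) (t : α) :
    ConeOrdConnected D {w ∈ dom | θ w = t} := fun w hw w' hw' z hz hz' =>
  have hzK := h w hw.1 w' hw'.1 (hw.2.trans hw'.2.symm) z hz hz'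
  ⟨hzK.1, hzK.2.trans hw.2⟩

lemma ConeOrdConnected.isCompleteLipGraph (hD : Convex ℝ D) (hD0 : D ∈ 𝓝 0)
    (hK : ConeOrdConnected D K) (h : interior K = ∅) : IsCompleteLipGraph (epiCone D) K := by
  refine ⟨fun w hw w' hw' hC => (mem_frontier_epiCone hD hD0).2 (hC.eq_of_not_lt fun hlt => ?_),
    fun w hw w' hw' z hz hz' => hK w hw w' hw' z hz hz'⟩
  exact (hK.interior_nonempty hD hD0 hw hw' hlt).ne_empty h

lemma IsLipGraph.interior_eq_empty (hD : Convex ℝ D) (hD0 : D ∈ 𝓝 0)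
    (h : IsLipGraph (epiCone D) K) : interior K = ∅ := by
  refine eq_empty_of_forall_notMem fun p hp => ?_
  obtain ⟨y, hy, hyK⟩ := exists_gt_mk_mem_of_mem_interior hp
  have hvert : ((p.1, y) : Wsp m) - p = (0, y - p.2) := Prod.ext (sub_self _) rfl
  have hC : ((p.1, y) : Wsp m) - p ∈ epiCone D := by
    show gauge D (_ - p).1 ≤ (_ - p).2
    rw [hvert, gauge_zero]
    exact (sub_pos.2 hy).le
  have hfr := (mem_frontier_epiCone hD hD0).1 (h p (interior_subset hp) _ hyK hC)
  rw [hvert, gauge_zero] at hfr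
  exact (sub_pos.2 hy).ne hfr

end EpiCone

theorem statement_9_general {m : ℕ} (D' : Set (Euc m))
    (hcv : Convex ℝ D') (h0 : (0 : Euc m) ∈ interior D')
    {T : Type*} [TopologicalSpace T] [PolishSpace T] [MeasurableSpace T] [BorelSpace T]
    (dom : Set (Wsp m)) (θ : Wsp m → T)
    (hgraph : IsSigmaCompact {p : Wsp m × T | p.1 ∈ dom ∧ p.2 = θ p.1})
    (hcomplete : ∀ w ∈ dom, ∀ w' ∈ dom, θ w = θ w' →
      ∀ z, z - w ∈ epiCone D' → w' - z ∈ epiCone D' → z ∈ dom ∧ θ z = θ w)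
    (hnondeg : ∀ t : T, {w ∈ dom | θ w = t}.Nonempty →
      ∃ w ∈ {w ∈ dom | θ w = t}, ∃ w' ∈ {w ∈ dom | θ w = t},
        interior {z | z - w ∈ epiCone D'} ∩ {z ∈ dom | θ z = t} = ∅ ∧
        interior {z | w' - z ∈ epiCone D'} ∩ {z ∈ dom | θ z = t} = ∅) :
    ∃ hminus hplus : T × Euc m → ℝ,
      Measurable hminus ∧ Measurable hplus ∧
      (∀ t : T, ∀ x ∈ Prod.fst '' {w ∈ dom | θ w = t}, ∀ x' ∈ Prod.fst '' {w ∈ dom | θ w = t},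
        hplus (t, x') - hplus (t, x) ≤ gauge D' (x' - x) ∧
        hminus (t, x') - hminus (t, x) ≤ gauge D' (x' - x)) ∧
      (∀ t : T, ∀ p ∈ closure {w ∈ dom | θ w = t}, p.1 ∈ Prod.fst '' {w ∈ dom | θ w = t} →
        hminus (t, p.1) ≤ p.2 ∧ p.2 ≤ hplus (t, p.1)) ∧
      (∀ t : T, interior {w ∈ dom | θ w = t} =
        {p : Wsp m | p.1 ∈ Prod.fst '' {w ∈ dom | θ w = t} ∧
          hminus (t, p.1) < p.2 ∧ p.2 < hplus (t, p.1)}) ∧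
      (∀ t : T, {w ∈ dom | θ w = t}.Nonempty →
        ((interior {w ∈ dom | θ w = t} = ∅ ↔
            ∀ x ∈ Prod.fst '' {w ∈ dom | θ w = t}, hminus (t, x) = hplus (t, x)) ∧
         (interior {w ∈ dom | θ w = t} = ∅ ↔
            IsCompleteLipGraph (epiCone D') {w ∈ dom | θ w = t}) ∧
         (interior {w ∈ dom | θ w = t} = ∅ ↔
            {w ∈ dom | θ w = t} =
              {p : Wsp m | p.1 ∈ Prod.fst '' {w ∈ dom | θ w = t} ∧ p.2 = hplus (t, p.1)}))) := by
  have hD0 : D' ∈ 𝓝 0 := mem_interior_iff_mem_nhds.1 h0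
  have hA : Absorbent ℝ D' := absorbent_nhds_zero hD0
  have hord := coneOrdConnected_fiber hcomplete
  have hbdd (t : T) := coneBddAbove_and_coneBddBelow_of_nondegenerate hcv hD0 (hnondeg t)
  have hint (t : T) := (hord t).interior_eq hcv hD0 (hbdd t).1 (hbdd t).2
  have hbetween (t : T) : ∀ w ∈ {w ∈ dom | θ w = t},
      lowerEnvelope D' {w ∈ dom | θ w = t} w.1 ≤ w.2 ∧
        w.2 ≤ upperEnvelope D' {w ∈ dom | θ w = t} w.1 := fun w hw =>
    ⟨(hbdd t).2.lowerEnvelope_le_snd hcv hA hw, (hbdd t).1.snd_le_upperEnvelope hcv hA hw⟩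
  have hgraph' : IsSigmaCompact {p : Wsp m × T | p.1 ∈ {w ∈ dom | θ w = p.2}} := by
    convert hgraph using 4 with p
    exact and_congr_right' eq_comm
  refine ⟨fun q => lowerEnvelope D' {w ∈ dom | θ w = q.1} q.2,
    fun q => upperEnvelope D' {w ∈ dom | θ w = q.1} q.2,
    measurable_lowerEnvelope hgraph' hcv hD0 fun t => (hbdd t).2,
    measurable_upperEnvelope hgraph' hcv hD0 fun t => (hbdd t).1, ?_, ?_, hint, ?_⟩
  · rintro t _ ⟨w, hw, rfl⟩ _ -
    exact ⟨(hbdd t).1.upperEnvelope_sub_le hcv hA ⟨w, hw⟩ _ _,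
      (hbdd t).2.lowerEnvelope_sub_le hcv hA ⟨w, hw⟩ _ _⟩
  · exact fun t p hp _ => ⟨(hbdd t).2.lowerEnvelope_le_of_mem_closure hcv hD0 hp,
      (hbdd t).1.le_upperEnvelope_of_mem_closure hcv hD0 hp⟩
  · exact fun t _ => ⟨interior_eq_empty_iff_eqOn (hbetween t) (hint t),
      ⟨(hord t).isCompleteLipGraph hcv hD0, fun h => h.1.interior_eq_empty hcv hD0⟩,
      interior_eq_empty_iff_eq_graph (hbetween t) (hint t)⟩

/-- **Characterization of the classes of a non-degenerate cone-Lipschitz foliation as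
regions between two cone-Lipschitz graphs** (Proposition 4.17 of Bianchini–Daneri). -/
theorem statement_9 {m : ℕ} (D' : Set (Euc m))
    (hcp : IsCompact D') (hcv : Convex ℝ D') (h0 : (0 : Euc m) ∈ interior D')
    {T : Type*} [TopologicalSpace T] [PolishSpace T] [MeasurableSpace T] [BorelSpace T]
    (dom : Set (Wsp m)) (θ : Wsp m → T)
    (hgraph : IsSigmaCompact {p : Wsp m × T | p.1 ∈ dom ∧ p.2 = θ p.1})
    (hcomplete : ∀ w ∈ dom, ∀ w' ∈ dom, θ w = θ w' →
      ∀ z, z - w ∈ epiCone D' → w' - z ∈ epiCone D' → z ∈ dom ∧ θ z = θ w)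
    (hnondeg : ∀ t : T, {w ∈ dom | θ w = t}.Nonempty →
      ∃ w ∈ {w ∈ dom | θ w = t}, ∃ w' ∈ {w ∈ dom | θ w = t},
        interior {z | z - w ∈ epiCone D'} ∩ {z ∈ dom | θ z = t} = ∅ ∧
        interior {z | w' - z ∈ epiCone D'} ∩ {z ∈ dom | θ z = t} = ∅) :
    ∃ hminus hplus : T × Euc m → ℝ,
      Measurable hminus ∧ Measurable hplus ∧
      (∀ t : T, ∀ x ∈ Prod.fst '' {w ∈ dom | θ w = t}, ∀ x' ∈ Prod.fst '' {w ∈ dom | θ w = t},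
        hplus (t, x') - hplus (t, x) ≤ gauge D' (x' - x) ∧
        hminus (t, x') - hminus (t, x) ≤ gauge D' (x' - x)) ∧
      (∀ t : T, ∀ p ∈ closure {w ∈ dom | θ w = t}, p.1 ∈ Prod.fst '' {w ∈ dom | θ w = t} →
        hminus (t, p.1) ≤ p.2 ∧ p.2 ≤ hplus (t, p.1)) ∧
      (∀ t : T, interior {w ∈ dom | θ w = t} =
        {p : Wsp m | p.1 ∈ Prod.fst '' {w ∈ dom | θ w = t} ∧
          hminus (t, p.1) < p.2 ∧ p.2 < hplus (t, p.1)}) ∧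
      (∀ t : T, {w ∈ dom | θ w = t}.Nonempty →
        ((interior {w ∈ dom | θ w = t} = ∅ ↔
            ∀ x ∈ Prod.fst '' {w ∈ dom | θ w = t}, hminus (t, x) = hplus (t, x)) ∧
         (interior {w ∈ dom | θ w = t} = ∅ ↔
            IsCompleteLipGraph (epiCone D') {w ∈ dom | θ w = t}) ∧
         (interior {w ∈ dom | θ w = t} = ∅ ↔
            {w ∈ dom | θ w = t} =
              {p : Wsp m | p.1 ∈ Prod.fst '' {w ∈ dom | θ w = t} ∧ p.2 = hplus (t, p.1)}))) :=
  statement_9_general D' hcv h0 dom θ hgraph hcomplete hnondeg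
end
end

section
/- Let Λ ⊆ ℝ^{d−k} × ℝ^k be σ-compact and let m̃ be a Borel probability measure on ℝ^{d−k} such that the section Λ(a) := {w : (a,w) ∈ Λ} is nonempty for m̃-a.e. a. Then there exist an m̃-conegligible σ-compact set Ã' ⊆ ℝ^{d−k} and countably many functions w_n : Ã' → ℝ^k, n ∈ ℕ, each with σ-compact graph, such that for every a ∈ Ã' one has {w_n(a) : n ∈ ℕ} ⊆ Λ(a) ⊆ clos{w_n(a) : n ∈ ℕ}. -/
open MeasureTheory Set
open scoped ENNReal

noncomputable section

/-!
Cover `Λ` by countably many compact sets `L e` whose fibres lie in small balls around the points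
of a dense sequence. Each `L e` has a Borel selection (Kuratowski–Ryll-Nardzewski), and by Lusin's
theorem this selection is continuous on countably many compact sets covering the projection of
`L e` up to a null set. Gluing the selections by first match over the projections, with `L e`
put first, gives `w e`; over a σ-compact conegligible set avoiding all the exceptional null sets
its graph is σ-compact, and `w e a ∈ L e` whenever `a` lies in the projection of `L e`, which
makes `{w e a}` dense in the section at `a`.
-/

open Metric Filter Topology

section FirstIndex

variable {X : Type*} {A : ℕ → Set X} {a : X}

lemma exists_mem_or_forall_notMem (A : ℕ → Set X) (a : X) :
    ∃ n, a ∈ A n ∨ ∀ m, a ∉ A m :=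
  (exists_or_forall_not (a ∈ A ·)).elim (fun ⟨n, hn⟩ => ⟨n, .inl hn⟩) fun h => ⟨0, .inr h⟩

open Classical

/-- The least `n` with `a ∈ A n`, and `0` if there is none. -/
def firstIndex (A : ℕ → Set X) (a : X) : ℕ :=
  Nat.find (exists_mem_or_forall_notMem A a)

lemma mem_firstIndex (h : ∃ n, a ∈ A n) : a ∈ A (firstIndex A a) :=
  (Nat.find_spec (exists_mem_or_forall_notMem A a)).resolve_right fun h' =>
    let ⟨n, hn⟩ := h; h' n hn

lemma firstIndex_eq_zero_of_forall_notMem (h : ∀ n, a ∉ A n) : firstIndex A a = 0 :=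
  Nat.find_eq_zero _ |>.2 (.inr h)

lemma notMem_of_lt_firstIndex {m : ℕ} (hm : m < firstIndex A a) : a ∉ A m := fun h =>
  Nat.find_min _ hm (.inl h)

lemma firstIndex_eq_of_mem {n : ℕ} (h : a ∈ A n) (hlt : ∀ m < n, a ∉ A m) :
    firstIndex A a = n := by
  refine le_antisymm (Nat.find_min' _ (.inl h)) (not_lt.1 fun hm => ?_)
  exact (Nat.find_spec (exists_mem_or_forall_notMem A a)).elim (hlt _ hm) fun h' => h' n h

lemma measurable_firstIndex [MeasurableSpace X] (hA : ∀ n, MeasurableSet (A n)) :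
    Measurable (firstIndex A) := by
  refine measurable_find (exists_mem_or_forall_notMem A) fun n => ?_
  have : {x | x ∈ A n ∨ ∀ m, x ∉ A m} = A n ∪ (⋃ m, A m)ᶜ := by ext; simp
  rw [this]
  exact (hA n).union (MeasurableSet.iUnion hA).compl

end FirstIndex

section SigmaCompact

lemma IsSigmaCompact.inter_isClosed {X : Type*} [TopologicalSpace X] {s t : Set X}
    (hs : IsSigmaCompact s) (ht : IsClosed t) : IsSigmaCompact (s ∩ t) := by
  obtain ⟨K, hK, rfl⟩ := hs
  exact ⟨fun n => K n ∩ t, fun n => (hK n).inter_right ht, (iUnion_inter t K).symm⟩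

lemma IsSigmaCompact.inter_isOpen {X : Type*} [PseudoEMetricSpace X] {s U : Set X}
    (hs : IsSigmaCompact s) (hU : IsOpen U) : IsSigmaCompact (s ∩ U) := by
  obtain ⟨F, hF, -, rfl, -⟩ := hU.exists_iUnion_isClosed
  rw [inter_iUnion]
  exact isSigmaCompact_iUnion _ fun n => hs.inter_isClosed (hF n)

variable {X Y : Type*} [PseudoEMetricSpace X] [TopologicalSpace Y]
  {P : ℕ → Set X} {g : ℕ → X → Y} {T : ℕ → ℕ → Set X} {A : Set X}

/-- On `T j s ∩ P j` minus the earlier `P i`, a relatively open subset of a closed set, the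
function glued by first match is the continuous `g j`. -/
theorem isSigmaCompact_graphOn_firstIndex (hP : ∀ j, IsClosed (P j))
    (hT : ∀ j s, IsClosed (T j s)) (hgT : ∀ j s, ContinuousOn (g j) (T j s))
    (hA : IsSigmaCompact A) (hAP : A ⊆ ⋃ j, P j) (hAT : ∀ j, A ∩ P j ⊆ ⋃ s, T j s) :
    IsSigmaCompact (graphOn (fun a => g (firstIndex P a) a) A) := by
  set piece : ℕ → ℕ → Set X := fun j s => A ∩ T j s ∩ P j ∩ (⋃ i ∈ Finset.range j, P i)ᶜ
  have hfirst : ∀ j s, ∀ a ∈ piece j s, firstIndex P a = j := fun j s a ha =>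
    firstIndex_eq_of_mem ha.1.2 fun i hi hai =>
      ha.2 (mem_biUnion (Finset.mem_coe.2 (Finset.mem_range.2 hi)) hai)
  have hgraph : graphOn (fun a => g (firstIndex P a) a) A =
      ⋃ j, ⋃ s, graphOn (g j) (piece j s) := by
    ext ⟨a, y⟩
    simp only [mem_graphOn, mem_iUnion]
    constructor
    · rintro ⟨ha, rfl⟩
      have haP : a ∈ P (firstIndex P a) := mem_firstIndex (mem_iUnion.1 (hAP ha))
      obtain ⟨s, hs⟩ := mem_iUnion.1 (hAT _ ⟨ha, haP⟩)
      refine ⟨firstIndex P a, s, ⟨⟨⟨ha, hs⟩, haP⟩, ?_⟩, rfl⟩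
      simp only [mem_compl_iff, mem_iUnion, Finset.mem_range, not_exists]
      exact fun i hi => notMem_of_lt_firstIndex hi
    · rintro ⟨j, s, hmem, rfl⟩
      exact ⟨hmem.1.1.1, by rw [hfirst j s a hmem]⟩
  rw [hgraph]
  refine isSigmaCompact_iUnion _ fun j => isSigmaCompact_iUnion _ fun s => ?_
  have hpiece : IsSigmaCompact (piece j s) :=
    ((hA.inter_isClosed (hT j s)).inter_isClosed (hP j)).inter_isOpen
      (isClosed_biUnion_finset fun i _ => hP i).isOpen_compl
  exact hpiece.image_of_continuousOn
    (continuousOn_id.prodMk ((hgT j s).mono fun a ha => ha.1.1.2))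

theorem exists_extension_isSigmaCompact_graphOn (hP : ∀ j, IsClosed (P j))
    (hT : ∀ j s, IsClosed (T j s)) (hgT : ∀ j s, ContinuousOn (g j) (T j s))
    (hA : IsSigmaCompact A) (hAP : A ⊆ ⋃ j, P j) (hAT : ∀ j, A ∩ P j ⊆ ⋃ s, T j s) (e : ℕ) :
    ∃ w : X → Y, IsSigmaCompact (graphOn w A) ∧
      ∀ a ∈ A, (a ∈ P e → w a = g e a) ∧ ∃ j, a ∈ P j ∧ w a = g j a := by
  set σ := Equiv.swap 0 e
  have hAPσ : A ⊆ ⋃ j, P (σ j) := by rwa [σ.surjective.iUnion_comp P]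
  refine ⟨fun a => g (σ (firstIndex (P ∘ σ) a)) a,
    isSigmaCompact_graphOn_firstIndex (fun j => hP (σ j)) (fun j => hT (σ j))
      (fun j => hgT (σ j)) hA hAPσ (fun j => hAT (σ j)), fun a ha => ⟨fun hae => ?_, ?_⟩⟩
  · have h0 : firstIndex (P ∘ σ) a = 0 :=
      firstIndex_eq_of_mem (by simpa [σ] using hae) (by simp)
    simp only [h0, σ, Equiv.swap_apply_left]
  · exact ⟨_, mem_firstIndex (A := P ∘ σ) (mem_iUnion.1 (hAPσ ha)), rfl⟩

end SigmaCompact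

section Regularity

variable {X : Type*} [MeasurableSpace X] {μ : Measure X}

theorem exists_seq_measure_sdiff_iUnion_eq_zero {S : Set X} {p : Set X → Prop}
    (h : ∀ ε : ℝ≥0∞, ε ≠ 0 → ∃ T, p T ∧ μ (S \ T) < ε) :
    ∃ T : ℕ → Set X, (∀ n, p (T n)) ∧ μ (S \ ⋃ n, T n) = 0 := by
  choose T hpT hT using fun n : ℕ =>
    h (n : ℝ≥0∞)⁻¹ (ENNReal.inv_ne_zero.2 (ENNReal.natCast_ne_top n))
  refine ⟨T, hpT, le_antisymm (le_of_forall_gt fun ε hε => ?_) zero_le⟩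
  obtain ⟨n, hn⟩ := ENNReal.exists_inv_nat_lt hε.ne'
  exact (measure_mono (sdiff_subset_sdiff_right (subset_iUnion T n))).trans_lt ((hT n).trans hn)

variable [TopologicalSpace X] [T2Space X] [OpensMeasurableSpace X] [μ.InnerRegularCompactLTTop]

theorem MeasurableSet.exists_isSigmaCompact_measure_sdiff_eq_zero {S : Set X}
    (hS : MeasurableSet S) (hμS : μ S ≠ ∞) :
    ∃ A ⊆ S, IsSigmaCompact A ∧ μ (S \ A) = 0 := by
  obtain ⟨T, hT, hTS⟩ := exists_seq_measure_sdiff_iUnion_eq_zero (μ := μ)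
    (p := fun T => T ⊆ S ∧ IsCompact T) fun ε hε =>
    let ⟨T, hTS, hTc, hT⟩ := hS.exists_isCompact_sdiff_lt hμS hε; ⟨T, ⟨hTS, hTc⟩, hT⟩
  exact ⟨⋃ n, T n, iUnion_subset fun n => (hT n).1, ⟨T, fun n => (hT n).2, rfl⟩, hTS⟩

/-- **Lusin's theorem.** For a countable basis `B`, inner approximations `C V ⊆ f ⁻¹' V` and
`D V ⊆ (f ⁻¹' V)ᶜ` make `f ⁻¹' V` relatively open in `⋂ V, C V ∪ D V`. -/
theorem Measurable.exists_isCompact_continuousOn_measure_sdiff_lt {Y : Type*}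
    [TopologicalSpace Y] [SecondCountableTopology Y] [MeasurableSpace Y] [OpensMeasurableSpace Y]
    {f : X → Y} (hf : Measurable f) {S : Set X} (hS : MeasurableSet S) (hμS : μ S ≠ ∞)
    {ε : ℝ≥0∞} (hε : ε ≠ 0) :
    ∃ T ⊆ S, IsCompact T ∧ ContinuousOn f T ∧ μ (S \ T) < ε := by
  set B := insert univ (TopologicalSpace.countableBasis Y)
  have : Countable B := ((TopologicalSpace.countable_countableBasis Y).insert univ).to_subtype
  have hBopen : ∀ V : B, IsOpen (V : Set Y) := fun V =>
    V.2.elim (· ▸ isOpen_univ) (TopologicalSpace.isOpen_of_mem_countableBasis ·)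
  obtain ⟨δ, hδ0, hδ⟩ := ENNReal.exists_pos_sum_of_countable' (ENNReal.half_pos hε).ne' B
  have hfin : ∀ t, μ (S ∩ t) ≠ ∞ := fun t =>
    ne_top_of_le_ne_top hμS (measure_mono inter_subset_left)
  choose C hCS hCc hCμ using fun V : B =>
    (hS.inter (hf (hBopen V).measurableSet)).exists_isCompact_sdiff_lt (hfin _) (hδ0 V).ne'
  choose D hDS hDc hDμ using fun V : B =>
    (hS.inter (hf (hBopen V).measurableSet).compl).exists_isCompact_sdiff_lt (hfin _) (hδ0 V).ne'
  have hCD : ∀ V : B, C V ∪ D V ⊆ S := fun V =>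
    union_subset (fun a ha => (hCS V ha).1) fun a ha => (hDS V ha).1
  set Vuniv : B := ⟨univ, mem_insert _ _⟩
  refine ⟨⋂ V, (C V ∪ D V), (iInter_subset _ Vuniv).trans (hCD Vuniv), ?_, ?_, ?_⟩
  · exact ((hCc Vuniv).union (hDc Vuniv)).of_isClosed_subset
      (isClosed_iInter fun V => (hCc V).isClosed.union (hDc V).isClosed) (iInter_subset _ Vuniv)
  · refine (TopologicalSpace.isBasis_countableBasis Y).continuousOn_iff.2 fun t ht =>
      ⟨(D ⟨t, mem_insert_of_mem _ ht⟩)ᶜ, (hDc _).isClosed.isOpen_compl, ?_⟩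
    ext a
    simp only [mem_inter_iff, mem_preimage, mem_compl_iff, mem_iInter]
    refine ⟨fun ⟨hat, hT⟩ => ⟨fun haD => (hDS _ haD).2 hat, hT⟩, fun ⟨haD, hT⟩ => ⟨?_, hT⟩⟩
    exact (hT ⟨t, mem_insert_of_mem _ ht⟩).elim (fun haC => (hCS _ haC).2) (absurd · haD)
  · have hsub : S \ ⋂ V, (C V ∪ D V) ⊆ ⋃ V : B, ((S ∩ f ⁻¹' V) \ C V ∪ (S ∩ (f ⁻¹' V)ᶜ) \ D V) := by
      intro a ⟨haS, haT⟩
      obtain ⟨V, haV⟩ := not_forall.1 (mem_iInter.not.1 haT)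
      refine mem_iUnion.2 ⟨V, ?_⟩
      by_cases hfa : f a ∈ (V : Set Y)
      · exact .inl ⟨⟨haS, hfa⟩, fun h => haV (.inl h)⟩
      · exact .inr ⟨⟨haS, hfa⟩, fun h => haV (.inr h)⟩
    calc μ (S \ ⋂ V, (C V ∪ D V))
        ≤ ∑' V : B, (μ ((S ∩ f ⁻¹' V) \ C V) + μ ((S ∩ (f ⁻¹' V)ᶜ) \ D V)) :=
          (measure_mono hsub).trans ((measure_iUnion_le _).trans
            (ENNReal.tsum_le_tsum fun V => measure_union_le _ _))
      _ ≤ ∑' V, δ V + ∑' V, δ V := by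
          rw [← ENNReal.tsum_add]
          exact ENNReal.tsum_le_tsum fun V => add_le_add (hCμ V).le (hDμ V).le
      _ < ε / 2 + ε / 2 := ENNReal.add_lt_add hδ hδ
      _ = ε := ENNReal.add_halves ε

end Regularity

section Selection

variable {X Y : Type*} [MetricSpace Y]

def selectionCandidates (K : Set (X × Y)) (u : ℕ → Y) (r : ℝ) (c : X → Y) (q : ℕ) : Set X :=
  {a | (∃ z, (a, z) ∈ K ∧ dist z (u q) ≤ r) ∧ dist (u q) (c a) < 3 * r}

/-- Kuratowski–Ryll-Nardzewski approximations of a selection of `K`, with radii `R / 2 ^ n`. -/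
def selectionApprox (K : Set (X × Y)) (u : ℕ → Y) (R : ℝ) : ℕ → X → Y
  | 0 => fun _ => u 0
  | n + 1 => fun a =>
      u (firstIndex (selectionCandidates K u (R / 2 ^ (n + 1)) (selectionApprox K u R n)) a)

variable {K : Set (X × Y)} {u : ℕ → Y} {R r : ℝ} {c : X → Y}

lemma exists_mem_selectionCandidates (hu : DenseRange u) (hr : 0 < r) {a : X} {z : Y}
    (hz : (a, z) ∈ K) (hza : dist z (c a) ≤ 2 * r) :
    ∃ q, a ∈ selectionCandidates K u r c q := by
  obtain ⟨q, hq⟩ := hu.exists_dist_lt z hr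
  refine ⟨q, ⟨z, hz, hq.le⟩, ?_⟩
  calc dist (u q) (c a) ≤ dist (u q) z + dist z (c a) := dist_triangle _ _ _
    _ < r + 2 * r := by rw [dist_comm]; exact add_lt_add_of_lt_of_le hq hza
    _ = 3 * r := by ring

lemma selectionApprox_of_notMem {a : X} (ha : a ∉ Prod.fst '' K) (n : ℕ) :
    selectionApprox K u R n a = u 0 := by
  cases n with
  | zero => rfl
  | succ n =>
    refine congrArg u (firstIndex_eq_zero_of_forall_notMem fun q ⟨⟨z, hz, _⟩, _⟩ => ?_)
    exact ha ⟨(a, z), hz, rfl⟩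

lemma selectionApprox_succ_mem (hu : DenseRange u) (hR : 0 < R) {n : ℕ} {a : X}
    (h : ∃ z, (a, z) ∈ K ∧ dist z (selectionApprox K u R n a) ≤ R / 2 ^ n) :
    a ∈ selectionCandidates K u (R / 2 ^ (n + 1)) (selectionApprox K u R n)
      (firstIndex (selectionCandidates K u (R / 2 ^ (n + 1)) (selectionApprox K u R n)) a) := by
  obtain ⟨z, hz, hza⟩ := h
  refine mem_firstIndex (exists_mem_selectionCandidates hu (by positivity) hz ?_)
  rwa [pow_succ, ← div_div, mul_div_cancel₀ _ two_ne_zero]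

lemma exists_near_selectionApprox (hu : DenseRange u) (hR : 0 < R)
    (hK : ∀ p ∈ K, dist p.2 (u 0) ≤ R) {a : X} (ha : a ∈ Prod.fst '' K) (n : ℕ) :
    ∃ z, (a, z) ∈ K ∧ dist z (selectionApprox K u R n a) ≤ R / 2 ^ n := by
  induction n with
  | zero =>
    obtain ⟨⟨a, z⟩, hz, rfl⟩ := ha
    exact ⟨z, hz, by simpa [selectionApprox] using hK _ hz⟩
  | succ n ih => exact (selectionApprox_succ_mem hu hR ih).1

lemma dist_selectionApprox_succ_le (hu : DenseRange u) (hR : 0 < R)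
    (hK : ∀ p ∈ K, dist p.2 (u 0) ≤ R) (a : X) (n : ℕ) :
    dist (selectionApprox K u R n a) (selectionApprox K u R (n + 1) a) ≤ 3 * R / 2 / 2 ^ n := by
  by_cases ha : a ∈ Prod.fst '' K
  · rw [dist_comm]
    refine ((selectionApprox_succ_mem hu hR (exists_near_selectionApprox hu hR hK ha n)).2).le.trans
      (le_of_eq ?_)
    rw [pow_succ]; ring
  · rw [selectionApprox_of_notMem ha, selectionApprox_of_notMem ha, dist_self]
    positivity

end Selection

section MeasurableSelection

variable {X Y : Type*} [TopologicalSpace X] [T2Space X] [MeasurableSpace X]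
  [OpensMeasurableSpace X] [MetricSpace Y] [MeasurableSpace Y] [BorelSpace Y]
  {K : Set (X × Y)} {u : ℕ → Y} {R : ℝ}

lemma measurableSet_selectionCandidates (hK : IsCompact K) {c : X → Y} (hc : Measurable c)
    (r : ℝ) (q : ℕ) : MeasurableSet (selectionCandidates K u r c q) := by
  have : selectionCandidates K u r c q =
      Prod.fst '' (K ∩ univ ×ˢ closedBall (u q) r) ∩ {a | dist (u q) (c a) < 3 * r} := by
    ext a
    simp [selectionCandidates]
  rw [this]
  exact ((hK.inter_right (isClosed_univ.prod isClosed_closedBall)).image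
    continuous_fst).measurableSet.inter
      (measurableSet_lt ((continuous_const.dist continuous_id).measurable.comp hc) measurable_const)

lemma measurable_selectionApprox (hK : IsCompact K) (n : ℕ) :
    Measurable (selectionApprox K u R n) := by
  induction n with
  | zero => exact measurable_const
  | succ n ih =>
    exact measurable_from_nat.comp
      (measurable_firstIndex fun q => measurableSet_selectionCandidates hK ih _ q)

theorem IsCompact.exists_measurable_selection [CompleteSpace Y]
    [TopologicalSpace.SeparableSpace Y] [Nonempty Y] (hK : IsCompact K) :
    ∃ f : X → Y, Measurable f ∧ ∀ a ∈ Prod.fst '' K, (a, f a) ∈ K := by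
  obtain ⟨u, hu⟩ := TopologicalSpace.exists_dense_seq Y
  obtain ⟨R, hR, hKR⟩ := (hK.image continuous_snd).isBounded.subset_closedBall_lt 0 (u 0)
  have hKR' : ∀ p ∈ K, dist p.2 (u 0) ≤ R := fun p hp => hKR ⟨p, hp, rfl⟩
  have hstep := dist_selectionApprox_succ_le (K := K) hu hR hKR'
  choose f hf using fun a =>
    cauchySeq_tendsto_of_complete (cauchySeq_of_le_geometric_two (hstep a))
  refine ⟨f, measurable_of_tendsto_metrizable (measurable_selectionApprox hK)
    (tendsto_pi_nhds.2 hf), fun a ha => ?_⟩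
  choose z hzK hz using exists_near_selectionApprox hu hR hKR' ha
  have hzf : Tendsto z atTop (𝓝 (f a)) := by
    refine tendsto_iff_dist_tendsto_zero.2 (squeeze_zero (fun _ => dist_nonneg) (fun n =>
      (dist_triangle _ _ _).trans (add_le_add (hz n)
        (dist_le_of_le_geometric_two_of_tendsto (hstep a) (hf a) n))) ?_)
    simpa using ((tendsto_const_nhds (x := R + 3 * R)).div_atTop
      (tendsto_pow_atTop_atTop_of_one_lt one_lt_two)).congr fun n => add_div _ _ _
  exact (hK.isClosed.preimage (Continuous.prodMk_right a)).mem_of_tendsto hzf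
    (Eventually.of_forall hzK)

theorem IsCompact.exists_selection_continuousOn_ae [CompleteSpace Y]
    [TopologicalSpace.SeparableSpace Y] [Nonempty Y] (hK : IsCompact K) (μ : Measure X) [IsFiniteMeasure μ]
    [μ.InnerRegularCompactLTTop] :
    ∃ g : X → Y, (∀ a ∈ Prod.fst '' K, (a, g a) ∈ K) ∧ ∃ T : ℕ → Set X,
      (∀ s, IsCompact (T s) ∧ ContinuousOn g (T s)) ∧ μ (Prod.fst '' K \ ⋃ s, T s) = 0 := by
  obtain ⟨g, hg, hgK⟩ := hK.exists_measurable_selection (X := X)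
  refine ⟨g, hgK, exists_seq_measure_sdiff_iUnion_eq_zero (μ := μ)
    (p := fun T => IsCompact T ∧ ContinuousOn g T) fun ε hε => ?_⟩
  obtain ⟨T, -, hTc, hgT, hT⟩ := hg.exists_isCompact_continuousOn_measure_sdiff_lt
    (hK.image continuous_fst).measurableSet (MeasureTheory.measure_ne_top μ _) hε
  exact ⟨T, ⟨hTc, hgT⟩, hT⟩

end MeasurableSelection

theorem IsSigmaCompact.exists_fine_compact_cover {X Y : Type*} [TopologicalSpace X]
    [PseudoMetricSpace Y] [TopologicalSpace.SeparableSpace Y] [Nonempty Y]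
    {Λ : Set (X × Y)} (hΛ : IsSigmaCompact Λ) :
    ∃ L : ℕ → Set (X × Y), (∀ e, IsCompact (L e)) ∧ (∀ e, L e ⊆ Λ) ∧
      ∀ p ∈ Λ, ∀ ε > 0, ∃ e, p ∈ L e ∧ ∀ p' ∈ L e, dist p'.2 p.2 < ε := by
  obtain ⟨K, hK, rfl⟩ := hΛ
  obtain ⟨u, hu⟩ := TopologicalSpace.exists_dense_seq Y
  set L : ℕ × ℕ × ℕ → Set (X × Y) := fun e =>
    K e.1 ∩ univ ×ˢ closedBall (u e.2.1) (1 / (e.2.2 + 1))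
  set σ := Denumerable.eqv (ℕ × ℕ × ℕ)
  refine ⟨fun e => L (σ.symm e),
    fun e => (hK _).inter_right (isClosed_univ.prod isClosed_closedBall),
    fun e => inter_subset_left.trans (subset_iUnion K _), ?_⟩
  rintro ⟨a, v⟩ hp ε hε
  obtain ⟨i, hi⟩ := mem_iUnion.1 hp
  obtain ⟨n, hn⟩ := exists_nat_one_div_lt (half_pos hε)
  obtain ⟨q, hq⟩ := hu.exists_dist_lt v (Nat.one_div_pos_of_nat (n := n))
  refine ⟨σ (i, q, n), ?_, fun p' hp' => ?_⟩
  · simp only [Equiv.symm_apply_apply, L]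
    exact ⟨hi, trivial, mem_closedBall.2 hq.le⟩
  · simp only [Equiv.symm_apply_apply, L, mem_inter_iff, mem_prod, mem_closedBall] at hp'
    calc dist p'.2 v ≤ dist p'.2 (u q) + dist (u q) v := dist_triangle _ _ _
      _ < ε / 2 + ε / 2 := by
        rw [dist_comm (u q)]
        exact add_lt_add_of_le_of_lt (hp'.2.2.trans hn.le) (hq.trans hn)
      _ = ε := add_halves ε

theorem exists_isSigmaCompact_subset_iUnion_measure_sdiff_eq_zero {X : Type*}
    [TopologicalSpace X] [T2Space X] [MeasurableSpace X] [OpensMeasurableSpace X]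
    (μ : Measure X) [IsFiniteMeasure μ] [μ.InnerRegularCompactLTTop]
    {P : ℕ → Set X} (hP : ∀ e, MeasurableSet (P e)) {T : ℕ → ℕ → Set X}
    (hT : ∀ e s, MeasurableSet (T e s)) (hPT : ∀ e, μ (P e \ ⋃ s, T e s) = 0) :
    ∃ A ⊆ ⋃ e, P e, IsSigmaCompact A ∧ μ ((⋃ e, P e) \ A) = 0 ∧
      ∀ e, A ∩ P e ⊆ ⋃ s, T e s := by
  set N := ⋃ e, (P e \ ⋃ s, T e s)
  have hN : MeasurableSet N :=
    .iUnion fun e => (hP e).diff (.iUnion fun s => hT e s)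
  obtain ⟨A, hAG, hA, hGA⟩ :=
    ((MeasurableSet.iUnion hP).diff hN).exists_isSigmaCompact_measure_sdiff_eq_zero (μ := μ)
      (measure_ne_top μ _)
  refine ⟨A, hAG.trans sdiff_subset, hA, measure_mono_null (t := N ∪ ((⋃ e, P e) \ N) \ A)
    (fun a ⟨haP, haA⟩ => ?_) (measure_union_null (measure_iUnion_null hPT) hGA),
    fun e a ⟨haA, haP⟩ => ?_⟩
  · by_cases haN : a ∈ N
    exacts [.inl haN, .inr ⟨⟨haP, haN⟩, haA⟩]
  · by_contra h
    exact (hAG haA).2 (mem_iUnion.2 ⟨e, haP, h⟩)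

/-- **Countable dense selections of the sections of a σ-compact set**
(Lemma 7.4 of Bianchini–Daneri). -/
theorem statement_15 {m k : ℕ} (Λ : Set (Euc m × Euc k))
    (hΛ : IsSigmaCompact Λ)
    (mt : Measure (Euc m)) [IsProbabilityMeasure mt]
    (hsec : ∀ᵐ a ∂mt, ∃ w, (a, w) ∈ Λ) :
    ∃ A' : Set (Euc m), IsSigmaCompact A' ∧ mt A'ᶜ = 0 ∧
      ∃ w : ℕ → Euc m → Euc k,
        (∀ n, IsSigmaCompact {p : Euc m × Euc k | p.1 ∈ A' ∧ p.2 = w n p.1}) ∧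
        ∀ a ∈ A', (∀ n, (a, w n a) ∈ Λ) ∧
          {v | (a, v) ∈ Λ} ⊆ closure {v | ∃ n, v = w n a} := by
  obtain ⟨L, hLc, hLΛ, hLfine⟩ := hΛ.exists_fine_compact_cover
  choose g hgL T hT hTnull using fun e => (hLc e).exists_selection_continuousOn_ae mt
  set P : ℕ → Set (Euc m) := fun e => Prod.fst '' L e
  have hPc : ∀ e, IsCompact (P e) := fun e => (hLc e).image continuous_fst
  obtain ⟨A', hA'P, hA', hA'null, hA'T⟩ :=
    exists_isSigmaCompact_subset_iUnion_measure_sdiff_eq_zero mt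
      (fun e => (hPc e).measurableSet) (fun e s => (hT e s).1.measurableSet) hTnull
  have hΛP : ∀ a w, (a, w) ∈ Λ → a ∈ ⋃ e, P e := fun a w hw =>
    let ⟨e, he, _⟩ := hLfine _ hw 1 one_pos
    mem_iUnion.2 ⟨e, _, he, rfl⟩
  have hA'co : mt A'ᶜ = 0 := by
    refine measure_mono_null (fun a ha => ?_) (measure_union_null (ae_iff.1 hsec) hA'null)
    by_cases hΛa : ∃ w, (a, w) ∈ Λ
    exacts [.inr ⟨hΛP a _ hΛa.choose_spec, ha⟩, .inl hΛa]
  choose w hwσ hwe hwj using fun e => exists_extension_isSigmaCompact_graphOn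
    (fun j => (hPc j).isClosed) (fun j s => (hT j s).1.isClosed) (fun j s => (hT j s).2)
    hA' hA'P hA'T e
  refine ⟨A', hA', hA'co, w, fun e => ?_, fun a ha => ⟨fun e => ?_, fun v hv => ?_⟩⟩
  · convert hwσ e using 1
    ext p
    rw [mem_graphOn]
    exact and_congr_right fun _ => eq_comm
  · obtain ⟨j, hj, hwj⟩ := hwj e a ha
    exact hwj ▸ hLΛ j (hgL j a hj)
  · refine Metric.mem_closure_iff.2 fun ε hε => ?_
    obtain ⟨e, he, hfine⟩ := hLfine _ hv ε hε
    have hae : a ∈ P e := ⟨_, he, rfl⟩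
    refine ⟨w e a, ⟨e, rfl⟩, ?_⟩
    rw [hwe e a ha hae, dist_comm]
    exact hfine (a, g e a) (hgL e a hae)
end
end

section
/- Let X, Y, Z be Polish spaces, μ a Borel probability measure on X, and f : X → Y, g : X → Z Borel maps. Assume that for every Borel set B ⊆ Y × Z there exists a Borel set B' ⊆ Z such that μ( (f,g)⁻¹(B) Δ g⁻¹(B') ) = 0, i.e. the σ-algebra generated by the pair (f,g) is contained, modulo μ-null sets, in the σ-algebra generated by g. Then there exist a Borel map s : Z → Y and a μ-conegligible Borel set F ⊆ X such that f(x) = s(g(x)) for all x ∈ F; in particular, f is μ-essentially constant on every level set of g. -/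
/-!
Code a point `y` of the standard Borel space `Y` by the sequence of its memberships in a
countable generating family `Cₙ`; this coding is a Borel embedding into `ℕ → Bool`. The
hypothesis replaces each `f⁻¹' Cₙ`, up to a null set, by some `g⁻¹' B'ₙ`, so almost everywhere
the code of `f x` is the Borel function `n ↦ (g x ∈ B'ₙ)` of `g x`, and inverting the coding
gives `s`.
-/

open MeasureTheory Set

theorem MeasurableEmbedding.exists_measurable_ae_eq_comp {X Y Z W : Type*}
    [MeasurableSpace X] [MeasurableSpace Y] [MeasurableSpace Z] [MeasurableSpace W]
    [Nonempty Y] {μ : Measure X} {f : X → Y} {g : X → Z} {φ : Y → W} {ψ : Z → W}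
    (hφ : MeasurableEmbedding φ) (hψ : Measurable ψ) (h : φ ∘ f =ᵐ[μ] ψ ∘ g) :
    ∃ s : Z → Y, Measurable s ∧ f =ᵐ[μ] s ∘ g := by
  obtain ⟨r, hr, hrφ⟩ := hφ.exists_measurable_extend measurable_id fun _ => inferInstance
  refine ⟨r ∘ ψ, hr.comp hψ, h.mono fun x hx => ?_⟩
  simp only [Function.comp_apply] at hx ⊢
  rw [← hx]
  exact (congrFun hrφ (f x)).symm

theorem exists_measurable_ae_eq_comp_of_ae_eq_preimage {X Y Z : Type*}
    [MeasurableSpace X] [MeasurableSpace Y] [StandardBorelSpace Y] [Nonempty Y]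
    [MeasurableSpace Z] {μ : Measure X} {f : X → Y} {g : X → Z}
    (h : ∀ B : Set Y, MeasurableSet B → ∃ B' : Set Z, MeasurableSet B' ∧
      f ⁻¹' B =ᵐ[μ] g ⁻¹' B') :
    ∃ s : Z → Y, Measurable s ∧ f =ᵐ[μ] s ∘ g := by
  classical
  choose B' hB' hfg using fun n =>
    h _ (MeasurableSpace.measurableSet_natGeneratingSequence (α := Y) n)
  have hφ : MeasurableEmbedding (MeasurableSpace.mapNatBool Y) :=
    (MeasurableSpace.measurable_mapNatBool Y).measurableEmbedding
      (MeasurableSpace.injective_mapNatBool Y)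
  have hψ : Measurable fun z n => decide (z ∈ B' n) :=
    measurable_pi_iff.mpr fun n => measurable_to_bool (by simpa [preimage] using hB' n)
  refine hφ.exists_measurable_ae_eq_comp hψ ?_
  filter_upwards [ae_all_iff.mpr hfg] with x hx
  funext n
  simp only [Function.comp_apply, MeasurableSpace.mapNatBool]
  exact decide_eq_decide.mpr (iff_of_eq (hx n))

theorem statement_18_general {X Y Z : Type*}
    [MeasurableSpace X]
    [TopologicalSpace Y] [PolishSpace Y] [MeasurableSpace Y] [BorelSpace Y]
    [MeasurableSpace Z]
    (μ : Measure X) [IsProbabilityMeasure μ]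
    (f : X → Y) (g : X → Z)
    (h : ∀ B : Set (Y × Z), MeasurableSet B →
      ∃ B' : Set Z, MeasurableSet B' ∧
        μ (((fun x => (f x, g x)) ⁻¹' B \ g ⁻¹' B') ∪
           (g ⁻¹' B' \ (fun x => (f x, g x)) ⁻¹' B)) = 0) :
    ∃ (s : Z → Y) (F : Set X), Measurable s ∧ MeasurableSet F ∧ μ Fᶜ = 0 ∧
      ∀ x ∈ F, f x = s (g x) := by
  have : Nonempty Y := (nonempty_of_isProbabilityMeasure μ).map f
  have hpreimage : ∀ B : Set Y, MeasurableSet B → ∃ B' : Set Z, MeasurableSet B' ∧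
      f ⁻¹' B =ᵐ[μ] g ⁻¹' B' := fun B hB => by
    obtain ⟨B', hB', hnull⟩ := h (B ×ˢ univ) (hB.prod .univ)
    have hpre : (fun x => (f x, g x)) ⁻¹' (B ×ˢ univ) = f ⁻¹' B := by ext; simp
    rw [hpre] at hnull
    exact ⟨B', hB', measure_symmDiff_eq_zero_iff.mp hnull⟩
  obtain ⟨s, hs, hfs⟩ := exists_measurable_ae_eq_comp_of_ae_eq_preimage hpreimage
  obtain ⟨F, hF, hFmeas, hFs⟩ := Filter.Eventually.exists_measurable_mem hfs
  exact ⟨s, F, hs, hFmeas, mem_ae_iff.mp hF, hFs⟩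

/-- **Factorization of a Borel map through another one whose σ-algebra dominates
modulo null sets** (key consequence of the minimality of equivalence relations,
Corollary A.3 of Bianchini–Daneri). -/
theorem statement_18 {X Y Z : Type*}
    [TopologicalSpace X] [PolishSpace X] [MeasurableSpace X] [BorelSpace X]
    [TopologicalSpace Y] [PolishSpace Y] [MeasurableSpace Y] [BorelSpace Y]
    [TopologicalSpace Z] [PolishSpace Z] [MeasurableSpace Z] [BorelSpace Z]
    (μ : Measure X) [IsProbabilityMeasure μ]
    (f : X → Y) (g : X → Z) (hf : Measurable f) (hg : Measurable g)
    (h : ∀ B : Set (Y × Z), MeasurableSet B →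
      ∃ B' : Set Z, MeasurableSet B' ∧
        μ (((fun x => (f x, g x)) ⁻¹' B \ g ⁻¹' B') ∪
           (g ⁻¹' B' \ (fun x => (f x, g x)) ⁻¹' B)) = 0) :
    ∃ (s : Z → Y) (F : Set X), Measurable s ∧ MeasurableSet F ∧ μ Fᶜ = 0 ∧
      ∀ x ∈ F, f x = s (g x) :=
  statement_18_general μ f g h
end
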